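/- arXiv:2505.08539 — 5 statements merged into one kernel-verified Lean document; each statement's English description precedes it below -/
import Mathlib

section
/- Let C_n^σ be an unbalanced signed cycle on n vertices. Then i₋(C_n^σ) = ⌈n/2⌉ − 1 if n ≡ 2 or 3 (mod 4), and i₋(C_n^σ) = ⌈n/2⌉ if n ≡ 0 or 1 (mod 4). -/
open Matrix

/-- A signed graph: a simple graph together with a `±1` sign on each edge. -/
structure SignedGraph (V : Type*) where
  G : SimpleGraph V
  sign : V → V → ℝ
  sign_symm : ∀ u v, sign u v = sign v u
  sign_pm : ∀ u v, G.Adj u v → sign u v = 1 ∨ sign u v = -1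

namespace SignedGraph

variable {V : Type*} [Fintype V] [DecidableEq V]

open scoped Classical

/-- The (signed) adjacency matrix of a signed graph. -/
noncomputable def adjMatrix (Γ : SignedGraph V) : Matrix V V ℝ :=
  fun u v => if Γ.G.Adj u v then Γ.sign u v else 0

lemma isHermitian (Γ : SignedGraph V) : Γ.adjMatrix.IsHermitian := by
  classical
  ext u v
  simp only [adjMatrix, Matrix.conjTranspose_apply, star_trivial]
  by_cases h : Γ.G.Adj v u
  · simp [h, h.symm, Γ.sign_symm v u]
  · have h' : ¬ Γ.G.Adj u v := fun hh => h hh.symm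
    simp [h, h']

/-- number of positive eigenvalues (with multiplicity). -/
noncomputable def posInertia (Γ : SignedGraph V) : ℕ :=
  (Finset.univ.filter fun i => 0 < Γ.isHermitian.eigenvalues i).card

/-- number of negative eigenvalues (with multiplicity). -/
noncomputable def negInertia (Γ : SignedGraph V) : ℕ :=
  (Finset.univ.filter fun i => Γ.isHermitian.eigenvalues i < 0).card

/-- multiplicity of the eigenvalue zero. -/
noncomputable def nullity (Γ : SignedGraph V) : ℕ :=
  (Finset.univ.filter fun i => Γ.isHermitian.eigenvalues i = 0).card

/-- The sign of an (unordered) edge. -/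
def edgeSign (Γ : SignedGraph V) : Sym2 V → ℝ :=
  Sym2.lift ⟨Γ.sign, Γ.sign_symm⟩

/-- A signed graph is balanced if every cycle has positive sign. -/
def Balanced (Γ : SignedGraph V) : Prop :=
  ∀ (v : V) (w : Γ.G.Walk v v), w.IsCycle → (w.edges.map Γ.edgeSign).prod = 1

/-- Switching equivalence of two signed graphs on the same vertex set. -/
def SwitchingEquiv (Γ₁ Γ₂ : SignedGraph V) : Prop :=
  Γ₁.G = Γ₂.G ∧ ∃ θ : V → ℝ, (∀ v, θ v = 1 ∨ θ v = -1) ∧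
    ∀ u v, Γ₁.G.Adj u v → Γ₂.sign u v = θ u * Γ₁.sign u v * θ v

/-- The induced signed subgraph on a finite set of vertices. -/
noncomputable def inducedOn (Γ : SignedGraph V) (s : Finset V) :
    SignedGraph {x // x ∈ s} where
  G := { Adj := fun a b => Γ.G.Adj a b
         symm := ⟨fun a b h => Γ.G.adj_symm h⟩
         loopless := ⟨fun a h => Γ.G.irrefl h⟩ }
  sign := fun a b => Γ.sign a b
  sign_symm := fun a b => Γ.sign_symm a b
  sign_pm := fun a b h => Γ.sign_pm a b h

end SignedGraph

/-!
Switching the signs of vertices along the path `0, 1, …, n - 1` moves every negative sign of an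
unbalanced cycle onto the closing edge `{n - 1, 0}` and does not change the spectrum. For each of
the `n` roots `μ = exp (i (2k+1) π / n)` of `μ ^ n = -1`, the vector `(μ ^ j)_j` is an eigenvector
of the resulting matrix with eigenvalue `μ + μ⁻¹ = 2 cos ((2k+1) π / n)`, and these vectors form an
invertible Vandermonde matrix. It remains to count the `k < n` with
`π / 2 < (2k+1) π / n < 3 π / 2`.
-/

open Polynomial

theorem Matrix.charpoly_conj_of_mul_eq_one {m R : Type*} [Fintype m] [DecidableEq m] [CommRing R]
    {P Q : Matrix m m R} (hQP : Q * P = 1) (A : Matrix m m R) :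
    (P * A * Q).charpoly = A.charpoly := by
  rw [charpoly_mul_comm, ← mul_assoc, hQP, one_mul]

lemma Polynomial.roots_prod_univ_X_sub_C {ι R : Type*} [Fintype ι] [CommRing R] [IsDomain R]
    (d : ι → R) : (∏ k, (X - C (d k))).roots = Finset.univ.val.map d := by
  have := roots_multiset_prod_X_sub_C (Finset.univ.val.map d)
  rwa [Multiset.map_map] at this

section Cycle

variable {n : ℕ} [NeZero n]

lemma Fin.val_add_one_eq_ite (j : Fin n) :
    (j + 1).val = if j.val + 1 = n then 0 else j.val + 1 := by
  obtain ⟨m, rfl⟩ := Nat.exists_eq_succ_of_ne_zero (NeZero.ne n)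
  simp [Fin.val_add_one, Fin.ext_iff]

lemma cycleGraph_adj_iff_eq_add_one (hn : 2 ≤ n) {u v : Fin n} :
    (SimpleGraph.cycleGraph n).Adj u v ↔ v = u + 1 ∨ u = v + 1 := by
  obtain ⟨m, rfl⟩ : ∃ m, n = m + 2 := ⟨n - 2, by omega⟩
  rw [SimpleGraph.cycleGraph_adj, sub_eq_iff_eq_add, sub_eq_iff_eq_add, add_comm v, add_comm u]
  tauto

lemma add_one_add_one_ne_self (hn : 3 ≤ n) (u : Fin n) : u + 1 + 1 ≠ u := by
  obtain ⟨m, rfl⟩ : ∃ m, n = m + 3 := ⟨n - 3, by omega⟩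
  rw [add_assoc, Ne, add_eq_left, Fin.ext_iff, Fin.val_add, Fin.val_one', Fin.val_zero,
    Nat.mod_eq_of_lt (by omega : 1 < m + 3), Nat.mod_eq_of_lt (by omega : 1 + 1 < m + 3)]
  omega

end Cycle

-- The sign of the edge `{u, u + 1}` in the cycle whose only negative edge is `{n - 1, 0}`.
def cycleTwist (R : Type*) [Ring R] (n : ℕ) (u : Fin n) : R :=
  if u.val + 1 = n then -1 else 1

def unbalancedCycleMatrix (R : Type*) [Ring R] (n : ℕ) [NeZero n] : Matrix (Fin n) (Fin n) R :=
  of fun u v => (if v = u + 1 then cycleTwist R n u else 0) +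
    (if u = v + 1 then cycleTwist R n v else 0)

section UnbalancedCycleMatrix

variable {n : ℕ} [NeZero n]

lemma unbalancedCycleMatrix_map {R S : Type*} [Ring R] [Ring S] (f : R →+* S) :
    (unbalancedCycleMatrix R n).map f = unbalancedCycleMatrix S n := by
  ext u v
  simp only [unbalancedCycleMatrix, cycleTwist, map_apply, of_apply, map_add]
  split_ifs <;> simp

lemma unbalancedCycleMatrix_mulVec {R : Type*} [Ring R] (x : Fin n → R) (j : Fin n) :
    (unbalancedCycleMatrix R n *ᵥ x) j =
      cycleTwist R n j * x (j + 1) + cycleTwist R n (j - 1) * x (j - 1) := by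
  have hpred (v : Fin n) : j = v + 1 ↔ v = j - 1 := by rw [eq_sub_iff_add_eq, eq_comm]
  simp [unbalancedCycleMatrix, mulVec, dotProduct, add_mul, Finset.sum_add_distrib, ite_mul, hpred]

section Twist

variable {R : Type*} [Ring R] {ζ : R}

lemma cycleTwist_mul_pow_val_add_one (hζ : ζ ^ n = -1) (j : Fin n) :
    cycleTwist R n j * ζ ^ (j + 1).val = ζ ^ (j.val + 1) := by
  rw [cycleTwist, Fin.val_add_one_eq_ite]
  split_ifs with h
  · rw [pow_zero, mul_one, h, hζ]
  · rw [one_mul]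

lemma cycleTwist_mul_pow_val_sub_one (hζ : ζ ^ n = -1) (j : Fin n) :
    cycleTwist R n (j - 1) * ζ ^ (j - 1).val * ζ = ζ ^ j.val := by
  obtain ⟨m, rfl⟩ := Nat.exists_eq_succ_of_ne_zero (NeZero.ne n)
  by_cases hj : j = 0
  · simp [hj, cycleTwist, ← pow_succ, hζ]
  · have hj0 : j.val ≠ 0 := fun h => hj (Fin.ext h)
    rw [cycleTwist, Fin.val_sub_one_of_ne_zero hj, if_neg (by omega), one_mul, ← pow_succ,
      Nat.sub_add_cancel (by omega)]

end Twist

variable {K : Type*} [Field K]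

lemma unbalancedCycleMatrix_mulVec_pow {ζ : K} (hζ : ζ ^ n = -1) :
    unbalancedCycleMatrix K n *ᵥ (fun j => ζ ^ j.val) = (ζ + ζ⁻¹) • fun j => ζ ^ j.val := by
  have hζ0 : ζ ≠ 0 := by
    rintro rfl
    simp [zero_pow (NeZero.ne n)] at hζ
  ext j
  have hpred : cycleTwist K n (j - 1) * ζ ^ (j - 1).val = ζ ^ j.val * ζ⁻¹ := by
    rw [← cycleTwist_mul_pow_val_sub_one hζ j, mul_inv_cancel_right₀ hζ0]
  rw [unbalancedCycleMatrix_mulVec, cycleTwist_mul_pow_val_add_one hζ, hpred, Pi.smul_apply,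
    smul_eq_mul, pow_succ]
  ring

theorem unbalancedCycleMatrix_charpoly {μ : Fin n → K} (hμ : Function.Injective μ)
    (hμn : ∀ k, μ k ^ n = -1) :
    (unbalancedCycleMatrix K n).charpoly = ∏ k, (X - C (μ k + (μ k)⁻¹)) := by
  set U := (vandermonde μ)ᵀ
  have hU : IsUnit U.det := by
    rw [isUnit_iff_ne_zero, det_transpose]
    exact det_vandermonde_ne_zero_iff.mpr hμ
  have hBU : unbalancedCycleMatrix K n * U = U * diagonal fun k => μ k + (μ k)⁻¹ := by
    ext j k
    rw [mul_diagonal, mul_comm]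
    exact congrFun (unbalancedCycleMatrix_mulVec_pow (hμn k)) j
  rw [← mul_nonsing_inv_cancel_right U (unbalancedCycleMatrix K n) hU, hBU,
    charpoly_conj_of_mul_eq_one (nonsing_inv_mul U hU), charpoly_diagonal]

end UnbalancedCycleMatrix

section Complex

open Complex
open scoped Real

lemma exp_pi_mul_I_div_pow_self (n : ℕ) [NeZero n] : exp (π * I / n) ^ n = -1 := by
  rw [← exp_nat_mul, mul_div_cancel₀ _ (Nat.cast_ne_zero.mpr (NeZero.ne n)), exp_pi_mul_I]

lemma injective_exp_pi_mul_I_div_pow_odd (n : ℕ) [NeZero n] :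
    Function.Injective fun k : Fin n => exp (π * I / n) ^ (2 * k.val + 1) := by
  intro k k' hk
  have hprim : IsPrimitiveRoot (exp (π * I / n) ^ 2) n := by
    rw [← exp_nat_mul]
    convert isPrimitiveRoot_exp n (NeZero.ne n) using 2
    push_cast
    ring
  simp only [pow_succ, pow_mul] at hk
  exact Fin.ext (hprim.pow_inj k.isLt k'.isLt (mul_right_cancel₀ (exp_ne_zero _) hk))

lemma exp_pi_mul_I_div_pow_add_inv (n k : ℕ) :
    exp (π * I / n) ^ k + (exp (π * I / n) ^ k)⁻¹ = (2 * Real.cos (k * π / n) : ℝ) := by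
  rw [← exp_nat_mul, ← exp_neg]
  push_cast
  rw [two_cos]
  ring_nf

theorem unbalancedCycleMatrix_real_charpoly (n : ℕ) [NeZero n] :
    (unbalancedCycleMatrix ℝ n).charpoly =
      ∏ k : Fin n, (X - C (2 * Real.cos ((2 * k.val + 1 : ℕ) * π / n))) := by
  apply map_injective ofRealHom ofReal_injective
  have hμn (k : Fin n) : (exp (π * I / n) ^ (2 * k.val + 1)) ^ n = -1 := by
    rw [← pow_mul, pow_mul', exp_pi_mul_I_div_pow_self, Odd.neg_one_pow (odd_two_mul_add_one _)]
  rw [← charpoly_map, unbalancedCycleMatrix_map,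
    unbalancedCycleMatrix_charpoly (injective_exp_pi_mul_I_div_pow_odd n) hμn]
  simp [Polynomial.map_prod, exp_pi_mul_I_div_pow_add_inv]

end Complex

section Count

open scoped Real

lemma cos_neg_iff_of_mem_Icc {x : ℝ} (hx : x ∈ Set.Icc 0 (2 * π)) :
    Real.cos x < 0 ↔ π / 2 < x ∧ x < 3 * π / 2 := by
  obtain ⟨hx0, hx2π⟩ := hx
  refine ⟨fun hcos => ?_, fun ⟨hlo, hhi⟩ => Real.cos_neg_of_pi_div_two_lt_of_lt hlo (by linarith)⟩
  by_contra hout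
  rcases le_or_gt x (π / 2) with hle | hgt
  · linarith [Real.cos_nonneg_of_neg_pi_div_two_le_of_le (by linarith) hle]
  · have hge : 3 * π / 2 ≤ x := not_lt.mp fun hlt => hout ⟨hgt, hlt⟩
    have := Real.cos_nonneg_of_neg_pi_div_two_le_of_le (x := x - 2 * π) (by linarith) (by linarith)
    rw [Real.cos_sub_two_pi] at this
    linarith

lemma cos_odd_mul_pi_div_neg_iff {n k : ℕ} (hk : k < n) :
    Real.cos ((2 * k + 1 : ℕ) * π / n) < 0 ↔ n < 2 * (2 * k + 1) ∧ 2 * (2 * k + 1) < 3 * n := by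
  have hπ := Real.pi_pos
  have hn : (0 : ℝ) < n := by exact_mod_cast (by omega : 0 < n)
  have hkn : ((2 * k + 1 : ℕ) : ℝ) ≤ 2 * n := by exact_mod_cast (by omega : 2 * k + 1 ≤ 2 * n)
  rw [cos_neg_iff_of_mem_Icc ⟨by positivity, by rw [div_le_iff₀ hn]; nlinarith⟩,
    div_lt_div_iff₀ two_pos hn, div_lt_div_iff₀ hn two_pos, ← Nat.cast_lt (α := ℝ),
    ← Nat.cast_lt (α := ℝ)]
  push_cast at hkn ⊢
  constructor <;> rintro ⟨h1, h2⟩ <;> constructor <;> nlinarith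

theorem card_filter_cos_odd_mul_pi_div_neg (n : ℕ) :
    (Finset.univ.filter fun k : Fin n => 2 * Real.cos ((2 * k.val + 1 : ℕ) * π / n) < 0).card =
      (3 * n + 1) / 4 - (n + 2) / 4 := by
  have hcos (k : Fin n) : 2 * Real.cos ((2 * k.val + 1 : ℕ) * π / n) < 0 ↔
      n < 2 * (2 * k.val + 1) ∧ 2 * (2 * k.val + 1) < 3 * n := by
    rw [← cos_odd_mul_pi_div_neg_iff k.isLt]
    constructor <;> intro <;> linarith
  have hrange : (Finset.range n).filter (fun k => n < 2 * (2 * k + 1) ∧ 2 * (2 * k + 1) < 3 * n) =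
      Finset.Ico ((n + 2) / 4) ((3 * n + 1) / 4) := by
    ext k
    simp only [Finset.mem_filter, Finset.mem_range, Finset.mem_Ico]
    omega
  rw [Finset.filter_congr fun k _ => hcos k, Finset.card_filter,
    Fin.sum_univ_eq_sum_range
      (fun k => if n < 2 * (2 * k + 1) ∧ 2 * (2 * k + 1) < 3 * n then 1 else 0),
    ← Finset.card_filter, hrange, Nat.card_Ico]

end Count

namespace SignedGraph

variable {V : Type*}

theorem negInertia_eq_card_of_charpoly_eq [Fintype V] [DecidableEq V] {ι : Type*} [Fintype ι]
    (Γ : SignedGraph V) {d : ι → ℝ} (hd : Γ.adjMatrix.charpoly = ∏ k, (X - C (d k))) :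
    Γ.negInertia = (Finset.univ.filter fun k => d k < 0).card := by
  have hroots := Γ.isHermitian.roots_charpoly_eq_eigenvalues
  rw [hd, Polynomial.roots_prod_univ_X_sub_C] at hroots
  have hcard : (Finset.univ.filter fun i => Γ.isHermitian.eigenvalues i < 0).card =
      (Finset.univ.filter fun k => d k < 0).card := calc
    _ = (Finset.univ.val.map Γ.isHermitian.eigenvalues).countP (· < 0) :=
      (Multiset.countP_map _ _ _).symm
    _ = (Finset.univ.val.map d).countP (· < 0) := by rw [hroots]; rfl
    _ = _ := Multiset.countP_map _ _ _
  -- `negInertia` filters with a classical decidability instance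
  rw [negInertia]
  convert hcard

lemma prod_edgeSign_walk_of_sign_eq_mul {Γ : SignedGraph V} {θ : V → ℝ} (hθ : ∀ v, θ v * θ v = 1)
    (hsign : ∀ u v, Γ.G.Adj u v → Γ.sign u v = θ u * θ v) {u v : V} (p : Γ.G.Walk u v) :
    (p.edges.map Γ.edgeSign).prod = θ u * θ v := by
  induction p with
  | nil => exact (hθ _).symm
  | @cons a b c hab _ ih =>
    rw [SimpleGraph.Walk.edges_cons, List.map_cons, List.prod_cons, ih]
    change Γ.sign a b * _ = _
    rw [hsign a b hab]
    linear_combination θ a * θ c * hθ b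

lemma balanced_of_sign_eq_mul {Γ : SignedGraph V} {θ : V → ℝ} (hθ : ∀ v, θ v * θ v = 1)
    (hsign : ∀ u v, Γ.G.Adj u v → Γ.sign u v = θ u * θ v) : Γ.Balanced := fun v w _ => by
  rw [prod_edgeSign_walk_of_sign_eq_mul hθ hsign w, hθ]

variable {n : ℕ} [NeZero n]

-- `θ j` is the product of the signs along the path `0, 1, …, j`. Switching by `θ` leaves only the
-- closing edge `{n - 1, 0}` possibly negative, with the sign `P` of the whole cycle; `P = 1` would
-- make `Γ` balanced.
theorem exists_switching_to_unbalancedCycle (hn : 2 ≤ n) {Γ : SignedGraph (Fin n)}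
    (hG : Γ.G = SimpleGraph.cycleGraph n) (hb : ¬ Γ.Balanced) :
    ∃ θ : Fin n → ℝ, (∀ v, θ v * θ v = 1) ∧
      ∀ j, Γ.sign j (j + 1) = θ j * cycleTwist ℝ n j * θ (j + 1) := by
  have hadj (j : Fin n) : Γ.G.Adj j (j + 1) := hG ▸ (cycleGraph_adj_iff_eq_add_one hn).2 (.inl rfl)
  let s : ℕ → ℝ := fun i => if h : i < n then Γ.sign ⟨i, h⟩ (⟨i, h⟩ + 1) else 1
  have hsj (j : Fin n) : s j = Γ.sign j (j + 1) := dif_pos j.isLt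
  have hs (i : ℕ) : s i * s i = 1 := by
    by_cases hi : i < n
    · rw [hsj ⟨i, hi⟩]
      rcases Γ.sign_pm _ _ (hadj ⟨i, hi⟩) with h | h <;> simp [h]
    · simp [s, hi]
  have hprod (m : ℕ) : (∏ i ∈ Finset.range m, s i) * ∏ i ∈ Finset.range m, s i = 1 := by
    simp [← Finset.prod_mul_distrib, hs]
  let θ : Fin n → ℝ := fun j => ∏ i ∈ Finset.range j, s i
  set P := ∏ i ∈ Finset.range n, s i with hP_def
  have hedge (j : Fin n) :
      Γ.sign j (j + 1) = θ j * (if j.val + 1 = n then P else 1) * θ (j + 1) := by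
    by_cases h : j.val + 1 = n
    · have hθ0 : θ (j + 1) = 1 := by simp [θ, Fin.val_add_one_eq_ite, h]
      have hrange : Finset.range n = Finset.range (j.val + 1) := by rw [h]
      rw [if_pos h, hθ0, mul_one, hP_def, hrange, Finset.prod_range_succ, ← mul_assoc, hprod,
        one_mul, hsj]
    · have hθs : θ (j + 1) = θ j * s j := by
        simp [θ, Fin.val_add_one_eq_ite, h, Finset.prod_range_succ]
      rw [if_neg h, hθs, mul_one, ← mul_assoc, hprod, one_mul, hsj]
  refine ⟨θ, fun v => hprod v, ?_⟩
  obtain hP | hP : P = 1 ∨ P = -1 := mul_self_eq_one_iff.mp (hprod n)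
  · refine (hb (balanced_of_sign_eq_mul (Γ := Γ) (fun v => hprod v) fun u v huv => ?_)).elim
    rcases (cycleGraph_adj_iff_eq_add_one hn).1 (hG ▸ huv) with rfl | rfl
    · rw [hedge, hP, ite_self, mul_one]
    · rw [Γ.sign_symm, hedge, hP, ite_self, mul_one, mul_comm]
  · intro j
    rw [hedge, cycleTwist, ← hP]

theorem adjMatrix_eq_diagonal_mul_unbalancedCycleMatrix (hn : 3 ≤ n) {Γ : SignedGraph (Fin n)}
    (hG : Γ.G = SimpleGraph.cycleGraph n) {θ : Fin n → ℝ}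
    (hsign : ∀ j, Γ.sign j (j + 1) = θ j * cycleTwist ℝ n j * θ (j + 1)) :
    Γ.adjMatrix = diagonal θ * unbalancedCycleMatrix ℝ n * diagonal θ := by
  ext u v
  have hadj := cycleGraph_adj_iff_eq_add_one (by omega : 2 ≤ n) (u := u) (v := v)
  rw [← hG] at hadj
  simp only [adjMatrix, mul_diagonal, diagonal_mul, unbalancedCycleMatrix, of_apply, hadj]
  by_cases huv : v = u + 1
  · subst huv
    simp [hsign, (add_one_add_one_ne_self hn u).symm]
  · by_cases hvu : u = v + 1
    · subst hvu
      simp [Γ.sign_symm (v + 1) v, hsign, (add_one_add_one_ne_self hn v).symm]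
      ring
    · simp [huv, hvu]

end SignedGraph

/-- negative inertia index of an unbalanced signed cycle. -/
theorem negInertia_unbalanced_cycle (n : ℕ) (hn : 3 ≤ n) (Γ : SignedGraph (Fin n))
    (h : Γ.G = SimpleGraph.cycleGraph n) (hb : ¬ Γ.Balanced) :
    ((n % 4 = 2 ∨ n % 4 = 3) → Γ.negInertia = (n + 1) / 2 - 1) ∧
      ((n % 4 = 0 ∨ n % 4 = 1) → Γ.negInertia = (n + 1) / 2) := by
  have : NeZero n := ⟨by omega⟩
  obtain ⟨θ, hθ, hsign⟩ := SignedGraph.exists_switching_to_unbalancedCycle (by omega) h hb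
  have hθθ : diagonal θ * diagonal θ = 1 := by rw [diagonal_mul_diagonal, funext hθ, diagonal_one]
  have hcharpoly : Γ.adjMatrix.charpoly = (unbalancedCycleMatrix ℝ n).charpoly := by
    rw [SignedGraph.adjMatrix_eq_diagonal_mul_unbalancedCycleMatrix hn h hsign,
      charpoly_conj_of_mul_eq_one hθθ]
  rw [unbalancedCycleMatrix_real_charpoly] at hcharpoly
  have hneg := Γ.negInertia_eq_card_of_charpoly_eq hcharpoly
  rw [card_filter_cos_odd_mul_pi_div_neg] at hneg
  omega
end

section
/- Let Γ be a signed graph containing a pendant vertex u (a vertex of degree 1), and let Γ' be the induced signed subgraph obtained by deleting u and its unique neighbor. Then i₊(Γ) = i₊(Γ') + 1 and i₋(Γ) = i₋(Γ') + 1 (and consequently η(Γ) = η(Γ')). -/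
open Matrix

/-!
Deleting the pendant edge `uv` splits a hyperbolic plane off the quadratic form `x ↦ xᵀ A x` of
the adjacency matrix. Extending a vector on `V ∖ {u, v}` by zero and choosing its `u`-coordinate
so that the `v`-row of `A` kills it embeds the form of `A(Γ')` isometrically into that of `A(Γ)`,
with image orthogonal to the vectors supported on `{u, v}`, on which the form takes both signs.
Hence maximal positive and negative definite subspaces gain a dimension, and the kernel of
`A(Γ')` embeds into that of `A(Γ)`. By Sylvester's law of inertia these dimensions are `i₊`,
`i₋` and `η`; their sum is the number of vertices, which drops by exactly two, so all three
inequalities are equalities.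
-/

open QuadraticMap QuadraticForm Module Finset

lemma Fintype.card_filter_pos_add_card_filter_neg_add_card_filter_eq_zero {ι α : Type*}
    [Fintype ι] [Zero α] [LinearOrder α] (f : ι → α) :
    #{i | 0 < f i} + #{i | f i < 0} + #{i | f i = 0} = Fintype.card ι := by
  simp only [Finset.card_filter]
  rw [← sum_add_distrib, ← sum_add_distrib, ← card_univ, Finset.card_eq_sum_ones]
  refine Finset.sum_congr rfl fun i _ => ?_
  split_ifs <;> grind

lemma Fintype.sum_eq_add_add_sum_compl_pair {V M : Type*} [Fintype V] [DecidableEq V]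
    [AddCommMonoid M] {u v : V} (huv : u ≠ v) (g : V → M) :
    ∑ w, g w = g u + g v + ∑ a : ↥(univ \ {u, v}), g a := by
  rw [← sum_pair huv, sum_coe_sort, add_comm, sum_sdiff (subset_univ _)]

namespace QuadraticForm

variable {𝕜 M M' : Type*} [Field 𝕜] [LinearOrder 𝕜] [IsStrictOrderedRing 𝕜]
  [AddCommGroup M] [Module 𝕜 M] [FiniteDimensional 𝕜 M]
  [AddCommGroup M'] [Module 𝕜 M'] [FiniteDimensional 𝕜 M']
  {Q : QuadraticForm 𝕜 M} {Q' : QuadraticForm 𝕜 M'} {f : M' →ₗ[𝕜] M} {z : M}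

/-- A maximal positive-definite subspace of `Q'`, carried over by `f`, stays positive definite
after adjoining a positive vector `z` that is `Q`-orthogonal to the range of `f`. -/
lemma sigPos_add_one_le (hf : Function.Injective f) (hQf : ∀ y, Q (f y) = Q' y)
    (hz : 0 < Q z) (horth : ∀ y, polar Q (f y) z = 0) : sigPos Q' + 1 ≤ sigPos Q := by
  obtain ⟨W, hW, hWpos⟩ := exists_finrank_eq_sigPos_and_posDef Q'
  have hQ_add (y : M') (t : 𝕜) : Q (f y + t • z) = Q' y + t * t * Q z := by
    rw [QuadraticMap.map_add Q, polar_smul_right, horth, hQf, QuadraticMap.map_smul, smul_eq_mul,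
      smul_zero, add_zero]
  have hz_notMem : z ∉ W.map f := by
    rintro ⟨y, -, rfl⟩
    have := horth y
    rw [polar_self, two_nsmul] at this
    linarith
  have hpos : (Q.restrict (W.map f ⊔ 𝕜 ∙ z)).PosDef := by
    rintro ⟨x, hx⟩ hx0
    obtain ⟨_, ⟨y, hy, rfl⟩, _, ht, rfl⟩ := Submodule.mem_sup.1 hx
    obtain ⟨t, rfl⟩ := Submodule.mem_span_singleton.1 ht
    rw [restrict_apply, hQ_add]
    by_cases hy0 : y = 0
    · subst hy0
      have ht0 : t ≠ 0 := by rintro rfl; simp at hx0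
      simpa using mul_pos (mul_self_pos.2 ht0) hz
    · have := hWpos ⟨y, hy⟩ (by simpa using hy0)
      rw [restrict_apply] at this
      nlinarith [mul_self_nonneg t]
  calc sigPos Q' + 1 = finrank 𝕜 ↥(W.map f ⊔ 𝕜 ∙ z) := by
        rw [Submodule.finrank_sup_span_singleton hz_notMem, ← hW,
          (Submodule.equivMapOfInjective f hf W).finrank_eq]
    _ ≤ sigPos Q := le_sigPos_of_posDef Q hpos

lemma sigNeg_add_one_le (hf : Function.Injective f) (hQf : ∀ y, Q (f y) = Q' y)
    (hz : Q z < 0) (horth : ∀ y, polar Q (f y) z = 0) : sigNeg Q' + 1 ≤ sigNeg Q :=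
  sigPos_add_one_le (Q := -Q) (Q' := -Q') hf (by simp [hQf]) (by simpa)
    (by simp [polar_neg, horth])

end QuadraticForm

namespace Matrix

variable {n : Type*} [Fintype n] [DecidableEq n]

lemma toQuadraticForm'_apply {R : Type*} [CommRing R] (A : Matrix n n R) (x : n → R) :
    A.toQuadraticForm' x = x ⬝ᵥ A *ᵥ x := by
  simp [toQuadraticForm', toLinearMap₂'_apply']

namespace IsHermitian

variable {A : Matrix n n ℝ} (hA : A.IsHermitian)
include hA

lemma toQuadraticForm'_equivalent_weightedSumSquares :
    A.toQuadraticForm'.Equivalent (weightedSumSquares ℝ hA.eigenvalues) := by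
  let U : Matrix n n ℝ := hA.eigenvectorUnitary
  have hspec : A = U * diagonal hA.eigenvalues * Uᵀ := by
    conv_lhs => rw [hA.spectral_theorem]
    simp [U, star_eq_conjTranspose, conjTranspose_eq_transpose_of_trivial]
  refine ⟨{ toLinearEquiv := UnitaryGroup.toLinearEquiv (star hA.eigenvectorUnitary),
            map_app' := fun x => ?_ }⟩
  change weightedSumSquares ℝ hA.eigenvalues (Uᵀ *ᵥ x) = A.toQuadraticForm' x
  calc weightedSumSquares ℝ hA.eigenvalues (Uᵀ *ᵥ x)
      = x ⬝ᵥ (U * diagonal hA.eigenvalues * Uᵀ) *ᵥ x := by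
        rw [weightedSumSquares_apply, ← mulVec_mulVec, ← mulVec_mulVec, dotProduct_mulVec,
          ← mulVec_transpose]
        simp only [dotProduct, mulVec_diagonal, smul_eq_mul]
        exact Finset.sum_congr rfl fun i _ => by ring
    _ = A.toQuadraticForm' x := by rw [← hspec, toQuadraticForm'_apply]

lemma card_pos_eigenvalues : #{i | 0 < hA.eigenvalues i} = sigPos A.toQuadraticForm' := by
  rw [sigPos_of_equiv_weightedSumSquares hA.toQuadraticForm'_equivalent_weightedSumSquares,
    ← Set.ncard_coe_finset]
  simp

lemma card_neg_eigenvalues : #{i | hA.eigenvalues i < 0} = sigNeg A.toQuadraticForm' := by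
  rw [sigNeg_of_equiv_weightedSumSquares hA.toQuadraticForm'_equivalent_weightedSumSquares,
    ← Set.ncard_coe_finset]
  simp

lemma card_eigenvalues_eq_zero :
    #{i | hA.eigenvalues i = 0} = finrank ℝ (LinearMap.ker A.mulVecLin) := by
  have hrank := LinearMap.finrank_range_add_finrank_ker A.mulVecLin
  rw [← rank, hA.rank_eq_card_non_zero_eigs, finrank_pi, Fintype.card_subtype] at hrank
  simp only [ne_eq] at hrank
  have := card_filter_add_card_filter_not (s := univ) (fun i => hA.eigenvalues i = 0)
  simp only [card_univ] at this
  omega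

lemma sigPos_add_sigNeg_add_finrank_ker :
    sigPos A.toQuadraticForm' + sigNeg A.toQuadraticForm' +
      finrank ℝ (LinearMap.ker A.mulVecLin) = Fintype.card n := by
  rw [← hA.card_pos_eigenvalues, ← hA.card_neg_eigenvalues, ← hA.card_eigenvalues_eq_zero]
  exact Fintype.card_filter_pos_add_card_filter_neg_add_card_filter_eq_zero _

end IsHermitian

def deletePair {V α : Type*} [Fintype V] [DecidableEq V] (A : Matrix V V α) (u v : V) :
    Matrix ↥(univ \ {u, v}) ↥(univ \ {u, v}) α :=
  A.submatrix (↑) (↑)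

lemma IsHermitian.deletePair {V α : Type*} [Fintype V] [DecidableEq V] [Star α]
    {A : Matrix V V α} (hA : A.IsHermitian) (u v : V) : (A.deletePair u v).IsHermitian :=
  hA.submatrix _

section Pendant

variable {V K : Type*} [Fintype V] [DecidableEq V] [Field K] {A : Matrix V V K} {u v : V}

variable (A u v) in
/-- Extension by zero, corrected at `u` so that the `v`-row of `A` annihilates it. -/
def pendantExtend : (↥(univ \ {u, v}) → K) →ₗ[K] V → K where
  toFun y w :=
    if h : w ∈ univ \ {u, v} then y ⟨w, h⟩
    else if w = u then -(A u v)⁻¹ * ∑ a : ↥(univ \ {u, v}), A v a * y a else 0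
  map_add' y y' := by
    ext w
    simp only [Pi.add_apply]
    split_ifs <;> simp [mul_add, sum_add_distrib]
  map_smul' c y := by
    ext w
    simp only [Pi.smul_apply, smul_eq_mul, RingHom.id_apply]
    split_ifs <;> simp [mul_left_comm _ c, ← mul_sum]

@[simp]
lemma pendantExtend_apply_coe (y : ↥(univ \ {u, v}) → K) (a : ↥(univ \ {u, v})) :
    A.pendantExtend u v y a = y a := by
  simp only [pendantExtend, LinearMap.coe_mk, AddHom.coe_mk, dif_pos a.2]

lemma pendantExtend_apply_left (y : ↥(univ \ {u, v}) → K) :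
    A.pendantExtend u v y u = -(A u v)⁻¹ * ∑ a : ↥(univ \ {u, v}), A v a * y a := by
  simp [pendantExtend]

lemma pendantExtend_apply_right (huv : u ≠ v) (y : ↥(univ \ {u, v}) → K) :
    A.pendantExtend u v y v = 0 := by
  simp [pendantExtend, huv.symm]

lemma pendantExtend_injective : Function.Injective (A.pendantExtend u v) := fun y y' h =>
  funext fun a => by simpa using congrFun h a

variable (hA : A.IsSymm) (huv : u ≠ v) (hu : ∀ w, w ≠ v → A u w = 0) (hAuv : A u v ≠ 0)

include huv hu in
lemma mulVec_pendantExtend_apply_left (y : ↥(univ \ {u, v}) → K) :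
    (A *ᵥ A.pendantExtend u v y) u = 0 := by
  rw [mulVec, dotProduct, Fintype.sum_eq_single v fun w hw => by rw [hu w hw, zero_mul],
    pendantExtend_apply_right huv, mul_zero]

include hA huv hu in
lemma mulVec_pendantExtend_apply_coe (y : ↥(univ \ {u, v}) → K) (a : ↥(univ \ {u, v})) :
    (A *ᵥ A.pendantExtend u v y) a = (A.deletePair u v *ᵥ y) a := by
  have hav : (a : V) ≠ v := fun h => by simpa [h] using a.2
  rw [mulVec, dotProduct, Fintype.sum_eq_add_add_sum_compl_pair huv, hA.apply, hu a hav,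
    pendantExtend_apply_right huv]
  simp [deletePair, mulVec, dotProduct]

include hA huv hAuv in
lemma mulVec_pendantExtend_apply_right (y : ↥(univ \ {u, v}) → K) :
    (A *ᵥ A.pendantExtend u v y) v = 0 := by
  rw [mulVec, dotProduct, Fintype.sum_eq_add_add_sum_compl_pair huv, hA.apply,
    pendantExtend_apply_left, pendantExtend_apply_right huv]
  simp only [pendantExtend_apply_coe]
  field_simp
  ring

include hA huv hu hAuv in
lemma dotProduct_mulVec_pendantExtend (x : V → K) (y : ↥(univ \ {u, v}) → K) :
    x ⬝ᵥ A *ᵥ A.pendantExtend u v y =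
      (fun a : ↥(univ \ {u, v}) => x a) ⬝ᵥ A.deletePair u v *ᵥ y := by
  rw [dotProduct, Fintype.sum_eq_add_add_sum_compl_pair huv,
    mulVec_pendantExtend_apply_left huv hu, mulVec_pendantExtend_apply_right hA huv hAuv]
  simp [dotProduct, mulVec_pendantExtend_apply_coe hA huv hu]

include hA huv hu hAuv in
lemma toQuadraticForm'_pendantExtend (y : ↥(univ \ {u, v}) → K) :
    A.toQuadraticForm' (A.pendantExtend u v y) = (A.deletePair u v).toQuadraticForm' y := by
  rw [toQuadraticForm'_apply, toQuadraticForm'_apply,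
    dotProduct_mulVec_pendantExtend hA huv hu hAuv]
  simp

include hA huv hu hAuv in
lemma polar_toQuadraticForm'_pendantExtend (y : ↥(univ \ {u, v}) → K) {z : V → K}
    (hz : ∀ a : ↥(univ \ {u, v}), z a = 0) :
    polar A.toQuadraticForm' (A.pendantExtend u v y) z = 0 := by
  rw [toQuadraticForm', LinearMap.BilinMap.polar_toQuadraticMap, toLinearMap₂'_apply',
    toLinearMap₂'_apply', dotProduct_mulVec, ← mulVec_transpose, hA.eq, dotProduct_comm,
    dotProduct_mulVec_pendantExtend hA huv hu hAuv]
  simp [hz]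

include hA huv hu hAuv in
lemma finrank_ker_deletePair_le :
    finrank K (LinearMap.ker (A.deletePair u v).mulVecLin) ≤
      finrank K (LinearMap.ker A.mulVecLin) := by
  rw [(Submodule.equivMapOfInjective _ (pendantExtend_injective (A := A)) _).finrank_eq]
  refine Submodule.finrank_mono (Submodule.map_le_iff_le_comap.2 fun y hy => ?_)
  rw [LinearMap.mem_ker, mulVecLin_apply] at hy
  rw [Submodule.mem_comap, LinearMap.mem_ker, mulVecLin_apply]
  ext w
  obtain rfl | rfl | hw : w = u ∨ w = v ∨ w ∈ univ \ {u, v} := by simp; tauto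
  · exact mulVec_pendantExtend_apply_left huv hu y
  · exact mulVec_pendantExtend_apply_right hA huv hAuv y
  · simpa [hy] using mulVec_pendantExtend_apply_coe hA huv hu y ⟨w, hw⟩

include hA hu huv hAuv in
lemma exists_toQuadraticForm'_eq [NeZero (2 : K)] (c : K) :
    ∃ z : V → K, (∀ a : ↥(univ \ {u, v}), z a = 0) ∧ A.toQuadraticForm' z = c := by
  refine ⟨((c - A v v) / (2 * A u v)) • Pi.single u 1 + Pi.single v 1, fun a => ?_, ?_⟩
  · have := a.2
    simp only [mem_sdiff, mem_univ, mem_insert, mem_singleton, true_and, not_or] at this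
    simp [this.1, this.2]
  · -- `Q (t • eᵤ + eᵥ) = 2 t A u v + A v v`, as `A u u = 0`
    have huu : A u u = 0 := hu u huv
    simp only [toQuadraticForm'_apply, mulVec_add, mulVec_smul, mulVec_single, MulOpposite.op_one,
      one_smul, dotProduct_add, dotProduct_smul, add_dotProduct, smul_dotProduct, single_dotProduct,
      col_apply, huu, mul_zero, smul_eq_mul, hA.apply u v, one_mul, zero_add]
    field_simp
    ring

section Inertia

variable [LinearOrder K] [IsStrictOrderedRing K]

include hA huv hu hAuv

lemma sigPos_deletePair_add_one_le :
    sigPos (A.deletePair u v).toQuadraticForm' + 1 ≤ sigPos A.toQuadraticForm' := by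
  obtain ⟨z, hz, hQz⟩ := exists_toQuadraticForm'_eq hA huv hu hAuv 1
  exact sigPos_add_one_le pendantExtend_injective (toQuadraticForm'_pendantExtend hA huv hu hAuv)
    (hQz ▸ one_pos) fun y => polar_toQuadraticForm'_pendantExtend hA huv hu hAuv y hz

lemma sigNeg_deletePair_add_one_le :
    sigNeg (A.deletePair u v).toQuadraticForm' + 1 ≤ sigNeg A.toQuadraticForm' := by
  obtain ⟨z, hz, hQz⟩ := exists_toQuadraticForm'_eq hA huv hu hAuv (-1)
  exact sigNeg_add_one_le pendantExtend_injective (toQuadraticForm'_pendantExtend hA huv hu hAuv)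
    (hQz ▸ neg_one_lt_zero) fun y => polar_toQuadraticForm'_pendantExtend hA huv hu hAuv y hz

end Inertia

end Pendant

theorem IsHermitian.inertia_deletePair {V : Type*} [Fintype V] [DecidableEq V]
    {A : Matrix V V ℝ} (hA : A.IsHermitian) {u v : V} (huv : u ≠ v)
    (hu : ∀ w, w ≠ v → A u w = 0) (hAuv : A u v ≠ 0) :
    sigPos A.toQuadraticForm' = sigPos (A.deletePair u v).toQuadraticForm' + 1 ∧
      sigNeg A.toQuadraticForm' = sigNeg (A.deletePair u v).toQuadraticForm' + 1 ∧
      finrank ℝ (LinearMap.ker A.mulVecLin) =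
        finrank ℝ (LinearMap.ker (A.deletePair u v).mulVecLin) := by
  have hA' : A.IsSymm := isHermitian_iff_isSymm.1 hA
  have hpos := sigPos_deletePair_add_one_le hA' huv hu hAuv
  have hneg := sigNeg_deletePair_add_one_le hA' huv hu hAuv
  have hker := finrank_ker_deletePair_le hA' huv hu hAuv
  have htot := hA.sigPos_add_sigNeg_add_finrank_ker
  have htot' := (hA.deletePair u v).sigPos_add_sigNeg_add_finrank_ker
  have hcard : Fintype.card ↥(univ \ {u, v}) + 2 = Fintype.card V := by
    rw [Fintype.card_coe, ← card_pair huv, card_sdiff_add_card_eq_card (subset_univ _), card_univ]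
  omega

end Matrix

namespace SignedGraph

variable {V : Type*} [Fintype V] [DecidableEq V] (Γ : SignedGraph V)

lemma posInertia_eq_sigPos : Γ.posInertia = sigPos Γ.adjMatrix.toQuadraticForm' :=
  Γ.isHermitian.card_pos_eigenvalues

lemma negInertia_eq_sigNeg : Γ.negInertia = sigNeg Γ.adjMatrix.toQuadraticForm' :=
  Γ.isHermitian.card_neg_eigenvalues

lemma nullity_eq_finrank_ker :
    Γ.nullity = finrank ℝ (LinearMap.ker Γ.adjMatrix.mulVecLin) :=
  Γ.isHermitian.card_eigenvalues_eq_zero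

lemma adjMatrix_inducedOn_compl_pair (u v : V) :
    (Γ.inducedOn (univ \ {u, v})).adjMatrix = Γ.adjMatrix.deletePair u v :=
  rfl

end SignedGraph

/-- deleting a pendant vertex together with its unique neighbor decreases
both inertia indices by exactly one and preserves the nullity. -/
theorem pendant_vertex_inertia {V : Type*} [Fintype V] [DecidableEq V] (Γ : SignedGraph V) (u v : V)
    (huv : Γ.G.Adj u v) (hdeg : ∀ w : V, Γ.G.Adj u w → w = v) :
    Γ.posInertia = (Γ.inducedOn (Finset.univ \ {u, v})).posInertia + 1 ∧
      Γ.negInertia = (Γ.inducedOn (Finset.univ \ {u, v})).negInertia + 1 ∧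
      Γ.nullity = (Γ.inducedOn (Finset.univ \ {u, v})).nullity := by
  have hu (w : V) (hw : w ≠ v) : Γ.adjMatrix u w = 0 := by
    have : ¬Γ.G.Adj u w := fun h => hw (hdeg w h)
    simp [SignedGraph.adjMatrix, this]
  have hAuv : Γ.adjMatrix u v ≠ 0 := by
    rcases Γ.sign_pm u v huv with h | h <;> simp [SignedGraph.adjMatrix, huv, h]
  rw [SignedGraph.posInertia_eq_sigPos, SignedGraph.posInertia_eq_sigPos,
    SignedGraph.negInertia_eq_sigNeg, SignedGraph.negInertia_eq_sigNeg,
    SignedGraph.nullity_eq_finrank_ker, SignedGraph.nullity_eq_finrank_ker,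
    Γ.adjMatrix_inducedOn_compl_pair]
  exact Γ.isHermitian.inertia_deletePair huv.ne hu hAuv
end

section
/- Let Γ be a connected signed graph with girth g (i.e., Γ contains a cycle and the shortest cycle has length g). Then i₋(Γ) ≥ ⌈g/2⌉ − 1. -/
/-!
A shortest cycle has length `g ≥ 2m + 1`, where `m = ⌈g/2⌉ - 1`, so it contains a path
`v₀, …, v_{2m-1}`, and this path is induced: a chord would close a cycle shorter than `g`.
Choose signs `dⱼ = ±1` making every edge `vⱼvⱼ₊₁` negative after switching. For `c ∈ ℝᵐ` the
vector `x = ∑ⱼ dⱼ c_{⌊j/2⌋} e_{vⱼ}` then satisfies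
`xᵀAx = -2 (∑ cᵢ² + ∑ cᵢcᵢ₊₁) = -(c₀² + c²_{m-1} + ∑ (cᵢ + cᵢ₊₁)²) < 0` for `c ≠ 0`,
so `A` is negative definite on an `m`-dimensional space and has at least `m` negative eigenvalues.
-/

open Matrix

open Finset

theorem sum_smul_single_dotProduct_mulVec_sum_smul_single {ι V R : Type*} [Fintype V]
    [DecidableEq V] [CommSemiring R] (A : Matrix V V R) (s : Finset ι) (p : ι → V) (y : ι → R) :
    (∑ j ∈ s, y j • Pi.single (p j) 1) ⬝ᵥ A *ᵥ ∑ k ∈ s, y k • Pi.single (p k) 1 =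
      ∑ j ∈ s, ∑ k ∈ s, y j * y k * A (p j) (p k) := by
  simp only [mulVec_sum, mulVec_smul, mulVec_single_one, sum_dotProduct, dotProduct_sum,
    smul_dotProduct, dotProduct_smul, single_one_dotProduct, smul_eq_mul]
  rw [sum_comm]
  simp only [mul_sum, col_apply]
  exact sum_congr rfl fun _ _ => sum_congr rfl fun _ _ => by ring

theorem sum_range_sum_range_mul_eq_of_tridiagonal {R : Type*} [CommRing R] (M : ℕ → ℕ → R)
    (y : ℕ → R) (n : ℕ) (hsymm : ∀ j k, M j k = M k j)
    (hzero : ∀ j k, j ≤ n → k ≤ n → j + 1 ≠ k → k + 1 ≠ j → M j k = 0) :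
    ∑ j ∈ range (n + 1), ∑ k ∈ range (n + 1), y j * y k * M j k =
      2 * ∑ j ∈ range n, y j * y (j + 1) * M j (j + 1) := by
  induction n with
  | zero => simp [hzero 0 0 le_rfl le_rfl one_ne_zero one_ne_zero]
  | succ n ih =>
    have hcol : ∑ j ∈ range (n + 1), y j * y (n + 1) * M j (n + 1) =
        y n * y (n + 1) * M n (n + 1) :=
      sum_eq_single_of_mem n (self_mem_range_succ n) fun j hj hjn => by
        rw [hzero j (n + 1) (by simp at hj; omega) le_rfl (by omega) (by simp at hj; omega),
          mul_zero]
    have hrow : ∑ k ∈ range (n + 1), y (n + 1) * y k * M (n + 1) k =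
        y n * y (n + 1) * M n (n + 1) := by
      rw [← hcol]
      exact sum_congr rfl fun k _ => by rw [hsymm]; ring
    rw [sum_range_succ, sum_congr rfl fun j _ => sum_range_succ _ _, sum_add_distrib,
      ih fun j k hj hk => hzero j k (by omega) (by omega), hcol, sum_range_succ, hrow,
      hzero (n + 1) (n + 1) le_rfl le_rfl (by omega) (by omega), sum_range_succ _ n]
    ring

theorem two_mul_sum_range_sq_add_sum_range_mul_succ (k : ℕ) (c : ℕ → ℝ) :
    2 * (∑ i ∈ range (k + 1), c i ^ 2 + ∑ i ∈ range k, c i * c (i + 1)) =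
      c 0 ^ 2 + c k ^ 2 + ∑ i ∈ range k, (c i + c (i + 1)) ^ 2 := by
  induction k with
  | zero => simp; ring
  | succ k ih =>
    rw [sum_range_succ _ (k + 1), sum_range_succ (fun i => c i * c (i + 1)),
      sum_range_succ (fun i => (c i + c (i + 1)) ^ 2)]
    linear_combination ih

theorem sum_range_sq_add_sum_range_mul_succ_pos (k : ℕ) (c : ℕ → ℝ) (hc : ∃ i ≤ k, c i ≠ 0) :
    0 < ∑ i ∈ range (k + 1), c i ^ 2 + ∑ i ∈ range k, c i * c (i + 1) := by
  have hsos := two_mul_sum_range_sq_add_sum_range_mul_succ k c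
  have hnonneg : 0 ≤ ∑ i ∈ range k, (c i + c (i + 1)) ^ 2 := sum_nonneg fun i _ => sq_nonneg _
  by_contra! hle
  have h0 : c 0 = 0 := by nlinarith [sq_nonneg (c k)]
  have hsum : ∀ i ∈ range k, (c i + c (i + 1)) ^ 2 = 0 :=
    (sum_eq_zero_iff_of_nonneg fun i _ => sq_nonneg _).mp (by nlinarith [sq_nonneg (c k)])
  have hzero : ∀ i ≤ k, c i = 0 := by
    intro i hi
    induction i with
    | zero => exact h0
    | succ i ih =>
      have := pow_eq_zero_iff two_ne_zero |>.mp (hsum i (mem_range.mpr hi))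
      linarith [ih (by omega)]
  obtain ⟨i, hi, hci⟩ := hc
  exact hci (hzero i hi)

theorem sum_range_two_mul_add_one_mul_div_two (k : ℕ) (c : ℕ → ℝ) :
    ∑ j ∈ range (2 * k + 1), c (j / 2) * c ((j + 1) / 2) =
      ∑ i ∈ range (k + 1), c i ^ 2 + ∑ i ∈ range k, c i * c (i + 1) := by
  induction k with
  | zero => simp; ring
  | succ k ih =>
    rw [show 2 * (k + 1) + 1 = 2 * k + 1 + 1 + 1 by ring, sum_range_succ, sum_range_succ, ih,
      sum_range_succ _ (k + 1), sum_range_succ (fun i => c i * c (i + 1)),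
      show (2 * k + 1) / 2 = k by omega, show (2 * k + 1 + 1) / 2 = k + 1 by omega,
      show (2 * k + 1 + 1 + 1) / 2 = k + 1 by omega]
    ring

theorem exists_mul_mul_succ_eq_neg_one (σ : ℕ → ℝ) (n : ℕ) (hσ : ∀ j < n, σ j ^ 2 = 1) :
    ∃ d : ℕ → ℝ, ∀ j < n, σ j * d j * d (j + 1) = -1 := by
  refine ⟨fun j => (-1) ^ j * ∏ i ∈ range j, σ i, fun j hj => ?_⟩
  have hprod : (∏ i ∈ range j, σ i) ^ 2 = 1 := by
    rw [← prod_pow]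
    exact prod_eq_one fun i hi => hσ i (by simp at hi; omega)
  have hsign : ((-1 : ℝ) ^ j) ^ 2 = 1 := by rw [← pow_mul, pow_mul']; norm_num
  simp only [prod_range_succ, pow_succ]
  linear_combination (-(((-1 : ℝ) ^ j) ^ 2 * (∏ i ∈ range j, σ i) ^ 2)) * hσ j hj -
    (∏ i ∈ range j, σ i) ^ 2 * hsign - hprod

namespace Matrix.IsHermitian

variable {n : Type*} [Fintype n] [DecidableEq n] {A : Matrix n n ℝ}

theorem dotProduct_mulVec_self_eq_sum_eigenvalues (hA : A.IsHermitian) (x : n → ℝ) :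
    x ⬝ᵥ A *ᵥ x =
      ∑ i, hA.eigenvalues i * ((star (hA.eigenvectorUnitary : Matrix n n ℝ) *ᵥ x) i) ^ 2 := by
  set U : Matrix n n ℝ := ↑hA.eigenvectorUnitary
  have h : x ⬝ᵥ A *ᵥ x = (star U *ᵥ x) ⬝ᵥ diagonal hA.eigenvalues *ᵥ (star U *ᵥ x) := by
    conv_lhs => rw [hA.spectral_theorem, Unitary.conjStarAlgAut_apply]
    rw [← mulVec_mulVec, ← mulVec_mulVec, dotProduct_mulVec, star_eq_conjTranspose,
      conjTranspose_eq_transpose_of_trivial, mulVec_transpose]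
    simp
  rw [h]
  simp only [dotProduct, mulVec_diagonal]
  exact sum_congr rfl fun i _ => by ring

theorem finrank_le_card_eigenvalues_neg {E : Type*} [AddCommGroup E] [Module ℝ E]
    [FiniteDimensional ℝ E] (hA : A.IsHermitian) (L : E →ₗ[ℝ] n → ℝ)
    (hL : ∀ c, c ≠ 0 → L c ⬝ᵥ A *ᵥ L c < 0) :
    Module.finrank ℝ E ≤ #{i | hA.eigenvalues i < 0} := by
  set Φ : E →ₗ[ℝ] {i // hA.eigenvalues i < 0} → ℝ :=
    LinearMap.funLeft ℝ ℝ Subtype.val ∘ₗ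
      mulVecLin (star (hA.eigenvectorUnitary : Matrix n n ℝ)) ∘ₗ L
  have hΦ : Function.Injective Φ := by
    rw [← LinearMap.ker_eq_bot, LinearMap.ker_eq_bot']
    intro c hc
    by_contra hc0
    refine (hL c hc0).not_ge ?_
    rw [hA.dotProduct_mulVec_self_eq_sum_eigenvalues]
    refine sum_nonneg fun i _ => ?_
    by_cases hi : hA.eigenvalues i < 0
    · simp [show (star (hA.eigenvectorUnitary : Matrix n n ℝ) *ᵥ L c) i = 0 from
        congrFun hc ⟨i, hi⟩]
    · exact mul_nonneg (not_lt.mp hi) (sq_nonneg _)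
  simpa [Fintype.card_subtype] using LinearMap.finrank_le_finrank_of_injective hΦ

end Matrix.IsHermitian

namespace SimpleGraph.Walk

variable {V : Type*} {G : SimpleGraph V}

theorem IsPath.egirth_le_length_add_one {u v : V} {p : G.Walk u v} (hp : p.IsPath)
    (hl : 2 ≤ p.length) (h : G.Adj v u) : G.egirth ≤ p.length + 1 := by
  have hcyc : (cons h p).IsCycle := (cons_isCycle_iff p h).mpr ⟨hp, fun he => by
    have := hp.length_eq_one_of_mem_edges (Sym2.eq_swap ▸ he)
    omega⟩
  simpa using egirth_le_length hcyc

theorem IsPath.egirth_le_of_adj_getVert {u v : V} {q : G.Walk u v} (hq : q.IsPath) {j k : ℕ}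
    (hjk : j + 2 ≤ k) (hk : k ≤ q.length) (h : G.Adj (q.getVert j) (q.getVert k)) :
    G.egirth ≤ (k - j : ℕ) + 1 := by
  have hend : (q.drop j).getVert (k - j) = q.getVert k := by
    rw [drop_getVert, Nat.add_sub_cancel' (by omega)]
  have hlen : ((q.drop j).take (k - j)).length = k - j := by
    simp only [take_length, drop_length]
    omega
  have := ((hq.drop j).take (k - j)).egirth_le_length_add_one (by omega)
    (hend ▸ h.symm : G.Adj ((q.drop j).getVert (k - j)) (q.getVert j))
  rwa [hlen] at this

theorem IsPath.adj_getVert_iff {u v : V} {q : G.Walk u v} (hq : q.IsPath)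
    (hg : (q.length + 2 : ℕ) ≤ G.egirth) {j k : ℕ} (hj : j ≤ q.length) (hk : k ≤ q.length) :
    G.Adj (q.getVert j) (q.getVert k) ↔ j + 1 = k ∨ k + 1 = j := by
  refine ⟨fun h => ?_, ?_⟩
  · have hchordless : ∀ {a b : ℕ}, a + 2 ≤ b → b ≤ q.length →
        ¬ G.Adj (q.getVert a) (q.getVert b) := fun hab hb hadj => by
      have := hg.trans (hq.egirth_le_of_adj_getVert hab hb hadj)
      norm_cast at this
      omega
    by_contra hne
    rcases lt_trichotomy j k with hjk | rfl | hjk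
    · exact hchordless (by omega) hk h
    · exact h.ne rfl
    · exact hchordless (by omega) hj h.symm
  · rintro (rfl | rfl)
    · exact q.adj_getVert_succ (by omega)
    · exact (q.adj_getVert_succ (by omega)).symm

end SimpleGraph.Walk

namespace SignedGraph

variable {V : Type*} [Fintype V] [DecidableEq V]

theorem sum_smul_single_dotProduct_adjMatrix_mulVec (Γ : SignedGraph V) (n : ℕ) (p : ℕ → V)
    (hp : ∀ j k, j ≤ n → k ≤ n → (Γ.G.Adj (p j) (p k) ↔ j + 1 = k ∨ k + 1 = j)) (y : ℕ → ℝ) :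
    (∑ j ∈ range (n + 1), y j • Pi.single (p j) 1) ⬝ᵥ
        Γ.adjMatrix *ᵥ ∑ j ∈ range (n + 1), y j • Pi.single (p j) 1 =
      2 * ∑ j ∈ range n, Γ.sign (p j) (p (j + 1)) * y j * y (j + 1) := by
  have hsymm : ∀ a b, Γ.adjMatrix (p a) (p b) = Γ.adjMatrix (p b) (p a) := fun a b => by
    simp only [adjMatrix]
    rw [Γ.G.adj_comm, Γ.sign_symm]
  have hzero : ∀ a b, a ≤ n → b ≤ n → a + 1 ≠ b → b + 1 ≠ a → Γ.adjMatrix (p a) (p b) = 0 :=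
    fun a b ha hb hab hba => by rw [adjMatrix, if_neg (by rw [hp a b ha hb]; omega)]
  rw [sum_smul_single_dotProduct_mulVec_sum_smul_single,
    sum_range_sum_range_mul_eq_of_tridiagonal _ _ _ hsymm hzero]
  refine congrArg (2 * ·) (sum_congr rfl fun j hj => ?_)
  rw [adjMatrix, if_pos ((hp j (j + 1) (by simp at hj; omega) (by simp at hj; omega)).mpr
    (.inl rfl))]
  ring

theorem le_negInertia_of_adj_iff (Γ : SignedGraph V) (m : ℕ) (p : ℕ → V)
    (hp : ∀ j k, j < 2 * m → k < 2 * m → (Γ.G.Adj (p j) (p k) ↔ j + 1 = k ∨ k + 1 = j)) :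
    m ≤ Γ.negInertia := by
  rcases m with _ | k
  · exact Nat.zero_le _
  obtain ⟨d, hd⟩ := exists_mul_mul_succ_eq_neg_one (fun j => Γ.sign (p j) (p (j + 1)))
    (2 * k + 1) fun j hj => by
      rcases Γ.sign_pm _ _ ((hp j (j + 1) (by omega) (by omega)).mpr (.inl rfl)) with h | h <;>
        simp [h]
  let e := Function.ExtendByZero.linearMap ℝ (Fin.val : Fin (k + 1) → ℕ)
  let L : (Fin (k + 1) → ℝ) →ₗ[ℝ] V → ℝ :=
    { toFun c := ∑ j ∈ range (2 * k + 1 + 1), (d j * e c (j / 2)) • Pi.single (p j) 1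
      map_add' c c' := by simp only [map_add, Pi.add_apply, mul_add, add_smul, sum_add_distrib]
      map_smul' r c := by
        simp only [map_smul, Pi.smul_apply, smul_eq_mul, RingHom.id_apply, smul_sum, smul_smul,
          mul_left_comm] }
  have hL : ∀ c, c ≠ 0 → L c ⬝ᵥ Γ.adjMatrix *ᵥ L c < 0 := by
    intro c hc
    obtain ⟨i, hi⟩ := Function.ne_iff.mp hc
    have hquad : L c ⬝ᵥ Γ.adjMatrix *ᵥ L c =
        -2 * ∑ j ∈ range (2 * k + 1), e c (j / 2) * e c ((j + 1) / 2) := by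
      simp only [L, LinearMap.coe_mk, AddHom.coe_mk]
      rw [Γ.sum_smul_single_dotProduct_adjMatrix_mulVec (2 * k + 1) p
        fun a b ha hb => hp a b (by omega) (by omega), mul_sum, mul_sum]
      refine sum_congr rfl fun j hj => ?_
      linear_combination (2 * e c (j / 2) * e c ((j + 1) / 2)) * hd j (mem_range.mp hj)
    have hci : e c i = c i := Fin.val_injective.extend_apply _ _ _
    have hpos := sum_range_sq_add_sum_range_mul_succ_pos k (e c) ⟨i, i.is_le, hci ▸ hi⟩
    rw [hquad, sum_range_two_mul_add_one_mul_div_two]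
    linarith
  simpa [negInertia] using Γ.isHermitian.finrank_le_card_eigenvalues_neg L hL

end SignedGraph

theorem negInertia_ge_of_girth_general {V : Type*} [Fintype V] [DecidableEq V] (Γ : SignedGraph V)
    (g : ℕ) (hg : Γ.G.egirth = g) :
    (g + 1) / 2 - 1 ≤ Γ.negInertia := by
  have hcyclic : ¬Γ.G.IsAcyclic := fun h => by simp [SimpleGraph.egirth_eq_top.mpr h] at hg
  obtain ⟨_, w, hw, hwg⟩ := Γ.G.exists_egirth_eq_length.mpr hcyclic
  have hlen : w.length = g := by exact_mod_cast hwg.symm.trans hg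
  have h3 := hw.three_le_length
  set q := w.tail.take (g - 2)
  have hq : q.IsPath := hw.isPath_tail.take _
  have hql : q.length = g - 2 := by
    have := w.length_tail_add_one hw.not_nil
    simp only [q, SimpleGraph.Walk.take_length]
    omega
  refine Γ.le_negInertia_of_adj_iff _ q.getVert fun j k hj hk =>
    hq.adj_getVert_iff ?_ (by omega) (by omega)
  rw [hql, hg]
  norm_cast
  omega

/-- for a connected signed graph of girth `g`, `i₋(Γ) ≥ ⌈g/2⌉ - 1`. -/
theorem negInertia_ge_of_girth {V : Type*} [Fintype V] [DecidableEq V] (Γ : SignedGraph V)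
    (hconn : Γ.G.Connected) (g : ℕ) (hg : Γ.G.egirth = g) :
    (g + 1) / 2 - 1 ≤ Γ.negInertia :=
  negInertia_ge_of_girth_general Γ g hg
end

section
/- Let Γ be a canonical signed unicyclic graph with girth g ≡ 0 or 2 (mod 4), not equal to its cycle, with k ≥ 1 pendant stars whose removal leaves signed paths P_{l₁}^σ, …, P_{l_k}^σ with g = k + l₁ + ⋯ + l_k. Then i₋(Γ) = ⌈g/2⌉ if and only if all of l₁, …, l_k are odd. -/
open Matrix

/-!
Deleting a pendant vertex `v` together with its neighbour `u` lowers the negative inertia index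
by exactly one: a change of variables in the quadratic form of the adjacency matrix splits off
the hyperbolic plane `2 σ(uv) a b` on the coordinates of `u` and `v`, and the hyperbolic plane has
one negative eigenvalue. Here the negative inertia index is handled through Sylvester's law,
as the largest dimension of a subspace on which the form is negative definite.

In `Γ`, every major vertex is deleted together with one of its pendant vertices; each remaining
path `P_l` then loses `⌊l/2⌋` such pairs, always from its end, and what is left has no edges.
Hence `i₋(Γ) = k + ∑ ⌊l_j/2⌋`. As `g = k + ∑ l_j` is even, this equals `g/2` exactly when every
`l_j` is odd.
-/

open Module Submodule Finset

namespace Submodule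

lemma finrank_map_of_injective {M N : Type*} [AddCommGroup M] [Module ℝ M] [AddCommGroup N]
    [Module ℝ N] {L : M →ₗ[ℝ] N} (hL : Function.Injective L) (W : Submodule ℝ M) :
    finrank ℝ (W.map L) = finrank ℝ W :=
  (LinearEquiv.finrank_eq (equivMapOfInjective L hL W)).symm

lemma finrank_prod {M N : Type*} [AddCommGroup M] [Module ℝ M] [FiniteDimensional ℝ M]
    [AddCommGroup N] [Module ℝ N] [FiniteDimensional ℝ N] (p : Submodule ℝ M)
    (q : Submodule ℝ N) : finrank ℝ (p.prod q) = finrank ℝ p + finrank ℝ q := by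
  have := LinearMap.finrank_range_of_inj (f := p.subtype.prodMap q.subtype)
    (Prod.map_injective.mpr ⟨p.injective_subtype, q.injective_subtype⟩)
  rwa [LinearMap.range_prodMap, range_subtype, range_subtype, Module.finrank_prod] at this

end Submodule

lemma Fintype.card_add_two_of_range_eq {n ι : Type*} [Fintype n] [DecidableEq n] [Fintype ι]
    {u v : n} (huv : u ≠ v) {e : ι → n} (he : Function.Injective e)
    (hrange : ∀ x, x ∈ Set.range e ↔ x ≠ u ∧ x ≠ v) : Fintype.card ι + 2 = Fintype.card n := by
  have himage : univ.map ⟨e, he⟩ = univ \ {u, v} := by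
    ext x
    simpa [not_or] using hrange x
  have := congrArg Finset.card himage
  rw [card_map, card_univ, card_sdiff_of_subset (subset_univ _), card_pair huv, card_univ] at this
  have : 2 ≤ Fintype.card n := card_pair huv ▸ card_le_univ _
  omega

namespace Matrix

section QuadForm

variable {n m ι : Type*} [Fintype n] [Fintype m] [Fintype ι]

def quadForm (A : Matrix n n ℝ) (x : n → ℝ) : ℝ := x ⬝ᵥ A *ᵥ x

def NegDefOn (A : Matrix n n ℝ) (W : Submodule ℝ (n → ℝ)) : Prop :=
  ∀ x ∈ W, x ≠ 0 → A.quadForm x < 0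

def NonnegOn (A : Matrix n n ℝ) (W : Submodule ℝ (n → ℝ)) : Prop :=
  ∀ x ∈ W, 0 ≤ A.quadForm x

lemma quadForm_smul (A : Matrix n n ℝ) (c : ℝ) (x : n → ℝ) :
    A.quadForm (c • x) = c ^ 2 * A.quadForm x := by
  simp only [quadForm, mulVec_smul, smul_dotProduct, dotProduct_smul, smul_eq_mul]
  ring

lemma quadForm_fromBlocks_zero (B : Matrix m m ℝ) (A : Matrix n n ℝ) (x : m ⊕ n → ℝ) :
    (fromBlocks B 0 0 A).quadForm x = B.quadForm (x ∘ Sum.inl) + A.quadForm (x ∘ Sum.inr) := by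
  simp [quadForm, fromBlocks_mulVec, dotProduct, Fintype.sum_sum_type]

lemma quadForm_hyperbolic (s : ℝ) (x : Fin 2 → ℝ) :
    (!![0, s; s, 0]).quadForm x = 2 * s * x 0 * x 1 := by
  simp [quadForm, dotProduct, mulVec, Fin.sum_univ_two]
  ring

lemma extend_zero_dotProduct {e : ι → n} (he : Function.Injective e) (z : ι → ℝ)
    (y : n → ℝ) : Function.extend e z 0 ⬝ᵥ y = z ⬝ᵥ (y ∘ e) :=
  (Fintype.sum_of_injective e he _ _
    (fun x hx => by rw [Function.extend_apply' _ _ _ hx, Pi.zero_apply, zero_mul])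
    (fun i => by rw [he.extend_apply]; rfl)).symm

lemma quadForm_extend_zero (A : Matrix n n ℝ) {e : ι → n} (he : Function.Injective e)
    (z : ι → ℝ) : A.quadForm (Function.extend e z 0) = (A.submatrix e e).quadForm z := by
  rw [quadForm, quadForm, extend_zero_dotProduct he]
  congr 1
  ext i
  simp only [Function.comp_apply, mulVec, dotProduct_comm (A (e i)), extend_zero_dotProduct he]
  rw [dotProduct_comm]
  rfl

variable {A : Matrix n n ℝ} {B : Matrix m m ℝ}

lemma NegDefOn.quadForm_nonpos {W : Submodule ℝ (n → ℝ)} (hW : A.NegDefOn W) {x : n → ℝ}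
    (hx : x ∈ W) : A.quadForm x ≤ 0 := by
  rcases eq_or_ne x 0 with rfl | hx0
  · simp [quadForm]
  · exact (hW x hx hx0).le

lemma NegDefOn.map {W : Submodule ℝ (m → ℝ)} (hW : B.NegDefOn W) {L : (m → ℝ) →ₗ[ℝ] (n → ℝ)}
    (hQ : ∀ x, A.quadForm (L x) = B.quadForm x) : A.NegDefOn (W.map L) := by
  rintro _ ⟨x, hx, rfl⟩ hx0
  rw [hQ]
  exact hW x hx fun h => hx0 (by rw [h, map_zero])

lemma NonnegOn.map {U : Submodule ℝ (m → ℝ)} (hU : B.NonnegOn U) {L : (m → ℝ) →ₗ[ℝ] (n → ℝ)}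
    (hQ : ∀ x, A.quadForm (L x) = B.quadForm x) : A.NonnegOn (U.map L) := by
  rintro _ ⟨x, hx, rfl⟩
  rw [hQ]
  exact hU x hx

lemma negDefOn_span_singleton {y : n → ℝ} (hy : A.quadForm y < 0) : A.NegDefOn (span ℝ {y}) := by
  intro x hx hx0
  obtain ⟨c, rfl⟩ := mem_span_singleton.mp hx
  have hc : c ≠ 0 := by rintro rfl; exact hx0 (zero_smul ℝ y)
  rw [quadForm_smul]
  exact mul_neg_of_pos_of_neg (by positivity) hy

lemma nonnegOn_span_singleton {y : n → ℝ} (hy : 0 ≤ A.quadForm y) : A.NonnegOn (span ℝ {y}) := by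
  intro x hx
  obtain ⟨c, rfl⟩ := mem_span_singleton.mp hx
  rw [quadForm_smul]
  positivity

lemma finrank_add_finrank_le_of_negDefOn_of_nonnegOn {W U : Submodule ℝ (n → ℝ)}
    (hW : A.NegDefOn W) (hU : A.NonnegOn U) : finrank ℝ W + finrank ℝ U ≤ Fintype.card n := by
  have hWU : W ⊓ U = ⊥ := (Submodule.eq_bot_iff _).mpr fun x hx => by
    by_contra hx0
    exact (hU x hx.2).not_gt (hW x hx.1 hx0)
  have := Submodule.finrank_sup_add_finrank_inf_eq W U
  rw [hWU, finrank_bot, add_zero] at this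
  rw [← this, ← Module.finrank_fintype_fun_eq_card (R := ℝ)]
  exact Submodule.finrank_le _

lemma dotProduct_mulVec_comm (hA : A.IsHermitian) (x y : n → ℝ) :
    x ⬝ᵥ A *ᵥ y = y ⬝ᵥ A *ᵥ x := by
  rw [dotProduct_mulVec, ← mulVec_transpose, ← conjTranspose_eq_transpose_of_trivial, hA,
    dotProduct_comm]

end QuadForm

variable {n m : Type*} [Fintype n] [DecidableEq n] [Fintype m] [DecidableEq m]

/-- For `A = Γ.adjMatrix` this is `Γ.negInertia`, definitionally. -/
noncomputable def negInertia (A : Matrix n n ℝ) (hA : A.IsHermitian) : ℕ :=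
  #{i | hA.eigenvalues i < 0}

section Spectral

variable {A : Matrix n n ℝ} (hA : A.IsHermitian)

lemma linearIndependent_eigenvectorBasis :
    LinearIndependent ℝ fun i => ⇑(hA.eigenvectorBasis i) :=
  hA.eigenvectorBasis.orthonormal.linearIndependent.map'
    (WithLp.linearEquiv 2 ℝ (n → ℝ)).toLinearMap (LinearEquiv.ker _)

lemma dotProduct_eigenvectorBasis (i j : n) :
    ⇑(hA.eigenvectorBasis i) ⬝ᵥ ⇑(hA.eigenvectorBasis j) = if i = j then 1 else 0 := by
  have h := orthonormal_iff_ite.mp hA.eigenvectorBasis.orthonormal i j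
  simpa [PiLp.inner_apply, dotProduct, mul_comm] using h

lemma quadForm_sum_smul_eigenvectorBasis (S : Finset n) (c : n → ℝ) :
    A.quadForm (∑ i ∈ S, c i • ⇑(hA.eigenvectorBasis i)) =
      ∑ i ∈ S, hA.eigenvalues i * c i ^ 2 := by
  simp only [quadForm, mulVec_sum, mulVec_smul, hA.mulVec_eigenvectorBasis, smul_smul,
    sum_dotProduct, dotProduct_sum, smul_dotProduct, dotProduct_smul,
    dotProduct_eigenvectorBasis, smul_eq_mul, mul_ite, mul_one, mul_zero, sum_ite_eq']
  exact sum_congr rfl fun i hi => by rw [if_pos hi]; ring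

lemma finrank_span_eigenvectorBasis (S : Finset n) :
    finrank ℝ (span ℝ ((fun i => ⇑(hA.eigenvectorBasis i)) '' S)) = #S := by
  rw [Set.image_eq_range]
  exact (finrank_span_eq_card ((linearIndependent_eigenvectorBasis hA).comp _
    Subtype.val_injective)).trans (Fintype.card_coe S)

lemma negDefOn_span_eigenvectorBasis {S : Finset n} (hS : ∀ i ∈ S, hA.eigenvalues i < 0) :
    A.NegDefOn (span ℝ ((fun i => ⇑(hA.eigenvectorBasis i)) '' S)) := by
  intro x hx hx0
  obtain ⟨c, rfl⟩ := (mem_span_image_finset_iff_exists_fun' ℝ).mp hx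
  obtain ⟨i, hi, hci⟩ : ∃ i ∈ S, c i ≠ 0 := by
    by_contra! h
    exact hx0 (sum_eq_zero fun i hi => by rw [h i hi, zero_smul])
  rw [quadForm_sum_smul_eigenvectorBasis]
  exact sum_neg' (fun j hj => mul_nonpos_of_nonpos_of_nonneg (hS j hj).le (sq_nonneg _))
    ⟨i, hi, mul_neg_of_neg_of_pos (hS i hi) (by positivity)⟩

lemma nonnegOn_span_eigenvectorBasis {S : Finset n} (hS : ∀ i ∈ S, 0 ≤ hA.eigenvalues i) :
    A.NonnegOn (span ℝ ((fun i => ⇑(hA.eigenvectorBasis i)) '' S)) := by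
  intro x hx
  obtain ⟨c, rfl⟩ := (mem_span_image_finset_iff_exists_fun' ℝ).mp hx
  rw [quadForm_sum_smul_eigenvectorBasis]
  exact sum_nonneg fun j hj => mul_nonneg (hS j hj) (sq_nonneg _)

lemma exists_negDefOn_finrank_eq : ∃ W, A.NegDefOn W ∧ finrank ℝ W = A.negInertia hA :=
  ⟨_, negDefOn_span_eigenvectorBasis hA fun _ hi => (mem_filter.mp hi).2,
    finrank_span_eigenvectorBasis hA _⟩

lemma exists_nonnegOn_finrank_add_eq :
    ∃ U, A.NonnegOn U ∧ finrank ℝ U + A.negInertia hA = Fintype.card n := by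
  refine ⟨_, nonnegOn_span_eigenvectorBasis hA (S := {i | 0 ≤ hA.eigenvalues i})
    fun _ hi => (mem_filter.mp hi).2, ?_⟩
  simp_rw [finrank_span_eigenvectorBasis, negInertia, ← not_lt, ← card_univ]
  exact add_comm _ _ |>.trans (card_filter_add_card_filter_not _)

end Spectral

section Inertia

variable {A : Matrix n n ℝ} (hA : A.IsHermitian) {B : Matrix m m ℝ} (hB : B.IsHermitian)

lemma finrank_le_negInertia_of_negDefOn {W : Submodule ℝ (n → ℝ)} (hW : A.NegDefOn W) :
    finrank ℝ W ≤ A.negInertia hA := by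
  obtain ⟨U, hU, hUrk⟩ := exists_nonnegOn_finrank_add_eq hA
  have := finrank_add_finrank_le_of_negDefOn_of_nonnegOn hW hU
  omega

lemma negInertia_add_finrank_le_of_nonnegOn {U : Submodule ℝ (n → ℝ)} (hU : A.NonnegOn U) :
    A.negInertia hA + finrank ℝ U ≤ Fintype.card n := by
  obtain ⟨W, hW, hWrk⟩ := exists_negDefOn_finrank_eq hA
  exact hWrk ▸ finrank_add_finrank_le_of_negDefOn_of_nonnegOn hW hU

theorem negInertia_le_of_injective {L : (m → ℝ) →ₗ[ℝ] (n → ℝ)} (hL : Function.Injective L)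
    (hQ : ∀ x, A.quadForm (L x) = B.quadForm x) : B.negInertia hB ≤ A.negInertia hA := by
  obtain ⟨W, hW, hWrk⟩ := exists_negDefOn_finrank_eq hB
  have := finrank_le_negInertia_of_negDefOn hA (hW.map hQ)
  rwa [finrank_map_of_injective hL, hWrk] at this

/-- Sylvester's law of inertia. -/
theorem negInertia_eq_of_injective (hcard : Fintype.card m = Fintype.card n)
    {L : (m → ℝ) →ₗ[ℝ] (n → ℝ)} (hL : Function.Injective L)
    (hQ : ∀ x, A.quadForm (L x) = B.quadForm x) : A.negInertia hA = B.negInertia hB := by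
  obtain ⟨U, hU, hUrk⟩ := exists_nonnegOn_finrank_add_eq hB
  have := negInertia_add_finrank_le_of_nonnegOn hA (hU.map hQ)
  rw [finrank_map_of_injective hL] at this
  have := negInertia_le_of_injective hA hB hL hQ
  omega

theorem negInertia_submatrix_equiv (e : m ≃ n) (hAe : (A.submatrix e e).IsHermitian) :
    (A.submatrix e e).negInertia hAe = A.negInertia hA := by
  refine (negInertia_eq_of_injective hA hAe (Fintype.card_congr e)
    (L := LinearEquiv.funCongrLeft ℝ ℝ e.symm) (LinearEquiv.injective _) fun x => ?_).symm
  change (x ∘ e.symm) ⬝ᵥ A *ᵥ (x ∘ e.symm) = x ⬝ᵥ A.submatrix e e *ᵥ x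
  rw [comp_equiv_symm_dotProduct, ← submatrix_mulVec_equiv]

theorem negInertia_eq_zero (h : A = 0) : A.negInertia hA = 0 := by
  have := negInertia_add_finrank_le_of_nonnegOn hA (U := ⊤) fun x _ => by simp [quadForm, h]
  rw [finrank_top, Module.finrank_fintype_fun_eq_card] at this
  omega

theorem negInertia_fromBlocks_zero (hBA : (fromBlocks B 0 0 A).IsHermitian) :
    (fromBlocks B 0 0 A).negInertia hBA = B.negInertia hB + A.negInertia hA := by
  set E := (LinearEquiv.sumArrowLequivProdArrow m n ℝ ℝ).symm
  have hQ : ∀ p, (fromBlocks B 0 0 A).quadForm (E p) = B.quadForm p.1 + A.quadForm p.2 :=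
    fun p => quadForm_fromBlocks_zero B A _
  obtain ⟨WB, hWB, hWBrk⟩ := exists_negDefOn_finrank_eq hB
  obtain ⟨WA, hWA, hWArk⟩ := exists_negDefOn_finrank_eq hA
  obtain ⟨UB, hUB, hUBrk⟩ := exists_nonnegOn_finrank_add_eq hB
  obtain ⟨UA, hUA, hUArk⟩ := exists_nonnegOn_finrank_add_eq hA
  have hneg : (fromBlocks B 0 0 A).NegDefOn ((WB.prod WA).map E.toLinearMap) := by
    rintro _ ⟨p, ⟨h1, h2⟩, rfl⟩ hp
    rw [LinearEquiv.coe_coe, hQ]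
    by_cases hp1 : p.1 = 0
    · have hp2 : p.2 ≠ 0 := fun hp2 => hp (by rw [show p = 0 from Prod.ext hp1 hp2, map_zero])
      linarith [hWB.quadForm_nonpos h1, hWA p.2 h2 hp2]
    · linarith [hWB p.1 h1 hp1, hWA.quadForm_nonpos h2]
  have hnonneg : (fromBlocks B 0 0 A).NonnegOn ((UB.prod UA).map E.toLinearMap) := by
    rintro _ ⟨p, ⟨h1, h2⟩, rfl⟩
    rw [LinearEquiv.coe_coe, hQ]
    linarith [hUB p.1 h1, hUA p.2 h2]
  have hlow := finrank_le_negInertia_of_negDefOn hBA hneg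
  have hup := negInertia_add_finrank_le_of_nonnegOn hBA hnonneg
  rw [finrank_map_of_injective E.injective, Submodule.finrank_prod] at hlow hup
  have := Fintype.card_sum (α := m) (β := n)
  omega

theorem negInertia_hyperbolic {s : ℝ} (hs : s ≠ 0) (hH : (!![0, s; s, 0]).IsHermitian) :
    (!![0, s; s, 0]).negInertia hH = 1 := by
  have hlow := finrank_le_negInertia_of_negDefOn hH
    (negDefOn_span_singleton (y := ![1, -s]) (by
      rw [quadForm_hyperbolic]; simp; nlinarith [sq_pos_of_ne_zero hs]))
  have hup := negInertia_add_finrank_le_of_nonnegOn hH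
    (nonnegOn_span_singleton (y := ![1, s]) (by
      rw [quadForm_hyperbolic]; simp; nlinarith [sq_nonneg s]))
  rw [finrank_span_singleton (by simp)] at hlow hup
  simp only [Fintype.card_fin] at hup
  omega

end Inertia

section Pendant

variable {ι : Type*}

/-- For a pendant vertex `v` at `u` and `e` listing the other indices, a change of variables
turning the quadratic form of `A` into that of `A.submatrix e e` plus the hyperbolic plane
`2 (A v u) a b`: the `v`-coordinate absorbs the cross terms between `u` and the rest. -/
noncomputable def pendantSplitting (A : Matrix n n ℝ) (u v : n) (e : ι → n) :
    (ι ⊕ Fin 2 → ℝ) →ₗ[ℝ] (n → ℝ) :=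
  let rest := Function.ExtendByZero.linearMap ℝ e ∘ₗ LinearMap.funLeft ℝ ℝ Sum.inl
  rest + (LinearMap.proj (Sum.inr 0 : ι ⊕ Fin 2)).smulRight (Pi.single u 1 : n → ℝ) +
    (LinearMap.proj (Sum.inr 1 : ι ⊕ Fin 2) -
      (A v u)⁻¹ • (LinearMap.proj u ∘ₗ A.mulVecLin ∘ₗ rest)).smulRight (Pi.single v 1 : n → ℝ)

lemma pendantSplitting_apply (A : Matrix n n ℝ) (u v : n) (e : ι → n) (w : ι ⊕ Fin 2 → ℝ) :
    pendantSplitting A u v e w =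
      Function.extend e (w ∘ Sum.inl) 0 + w (Sum.inr 0) • Pi.single u 1 +
      (w (Sum.inr 1) - (A v u)⁻¹ * (A *ᵥ Function.extend e (w ∘ Sum.inl) 0) u) • Pi.single v 1 :=
  rfl

lemma quadForm_pendantSplitting [Fintype ι] {A : Matrix n n ℝ} (hA : A.IsHermitian) {u v : n}
    (huu : A u u = 0) (hvu : A v u ≠ 0) (hrow : ∀ x, x ≠ u → A v x = 0) {e : ι → n}
    (he : Function.Injective e) (hu : u ∉ Set.range e) (hv : v ∉ Set.range e)
    (w : ι ⊕ Fin 2 → ℝ) :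
    A.quadForm (pendantSplitting A u v e w) =
      (fromBlocks (A.submatrix e e) 0 0 !![0, A v u; A v u, 0]).quadForm w := by
  have hsymm : ∀ x y, A x y = A y x := fun x y => by simpa using hA.apply y x
  have huv : u ≠ v := by rintro rfl; exact hvu huu
  rw [pendantSplitting_apply, quadForm_fromBlocks_zero, ← quadForm_extend_zero A he,
    quadForm_hyperbolic]
  set s := A v u with hs
  set z := Function.extend e (w ∘ Sum.inl) 0
  have hzu : z u = 0 := Function.extend_apply' _ _ _ (by simpa using hu)
  have hAv : A *ᵥ Pi.single v 1 = s • Pi.single u 1 := by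
    ext x
    rw [mulVec_single_one, col_apply, hsymm, Pi.smul_apply, Pi.single_apply, smul_eq_mul]
    split_ifs with hx
    · rw [hx, mul_one]
    · rw [hrow x hx, mul_zero]
  have hAzv : (A *ᵥ z) v = 0 := by
    change ∑ x, A v x * z x = 0
    refine sum_eq_zero fun x _ => ?_
    rcases eq_or_ne x u with rfl | hx
    · rw [hzu, mul_zero]
    · rw [hrow x hx, zero_mul]
  simp only [quadForm, add_dotProduct, dotProduct_add, mulVec_add, mulVec_smul, smul_dotProduct,
    dotProduct_smul, smul_eq_mul, hAv, single_dotProduct, dotProduct_single, one_mul, mul_one]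
  rw [dotProduct_mulVec_comm hA z (Pi.single u 1), single_dotProduct, one_mul]
  simp only [mulVec_single_one, col_apply, Pi.add_apply, Function.comp_apply,
    Pi.smul_apply, smul_eq_mul, Pi.single_eq_same, Pi.single_eq_of_ne huv, hzu, hAzv, huu, ← hs]
  field_simp
  ring

lemma pendantSplitting_injective (A : Matrix n n ℝ) {u v : n} (huv : u ≠ v) {e : ι → n}
    (he : Function.Injective e) (hu : u ∉ Set.range e) (hv : v ∉ Set.range e) :
    Function.Injective (pendantSplitting A u v e) := by
  refine (injective_iff_map_eq_zero _).mpr fun w hw => ?_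
  have hz : w ∘ Sum.inl = 0 := by
    ext i
    have h := congrFun hw (e i)
    rwa [pendantSplitting_apply, Pi.add_apply, Pi.add_apply, he.extend_apply, Pi.smul_apply,
      Pi.smul_apply, Pi.single_eq_of_ne (fun h => hu ⟨i, h⟩),
      Pi.single_eq_of_ne (fun h => hv ⟨i, h⟩), smul_zero, smul_zero, add_zero, add_zero] at h
  have ha := congrFun hw u
  have hb := congrFun hw v
  have h0 : Function.extend e (0 : ι → ℝ) 0 = 0 := Function.extend_const e 0
  simp only [pendantSplitting_apply, hz, h0, mulVec_zero, Pi.add_apply, Pi.zero_apply,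
    Pi.smul_apply, Pi.single_eq_same, Pi.single_eq_of_ne huv, Pi.single_eq_of_ne huv.symm,
    smul_eq_mul, mul_zero, mul_one, sub_zero, zero_add, add_zero] at ha hb
  ext (i | i)
  · exact congrFun hz i
  · fin_cases i
    exacts [ha, hb]

theorem negInertia_eq_submatrix_add_one_of_pendant [Fintype ι] [DecidableEq ι]
    {A : Matrix n n ℝ} (hA : A.IsHermitian) {u v : n} (huu : A u u = 0) (hvu : A v u ≠ 0)
    (hrow : ∀ x, x ≠ u → A v x = 0) {e : ι → n} (he : Function.Injective e)
    (hrange : ∀ x, x ∈ Set.range e ↔ x ≠ u ∧ x ≠ v) (hAe : (A.submatrix e e).IsHermitian) :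
    A.negInertia hA = (A.submatrix e e).negInertia hAe + 1 := by
  have huv : u ≠ v := by rintro rfl; exact hvu huu
  have hu : u ∉ Set.range e := fun h => ((hrange u).mp h).1 rfl
  have hv : v ∉ Set.range e := fun h => ((hrange v).mp h).2 rfl
  have hH : (!![0, A v u; A v u, 0]).IsHermitian := by
    ext i j
    fin_cases i <;> fin_cases j <;> simp
  have hB : (fromBlocks (A.submatrix e e) 0 0 !![0, A v u; A v u, 0]).IsHermitian :=
    hAe.fromBlocks (by simp) hH
  have hcard : Fintype.card (ι ⊕ Fin 2) = Fintype.card n := by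
    rw [Fintype.card_sum, Fintype.card_fin, Fintype.card_add_two_of_range_eq huv he hrange]
  rw [negInertia_eq_of_injective hA hB hcard (pendantSplitting_injective A huv he hu hv)
    (quadForm_pendantSplitting hA huu hvu hrow he hu hv), negInertia_fromBlocks_zero hH hAe hB,
    negInertia_hyperbolic hvu]

end Pendant

end Matrix

lemma Finset.mem_image_range_add_two {α : Type*} [DecidableEq α] {p : ℕ → α} {n : ℕ} {x : α} :
    x ∈ (range (n + 2)).image p ↔ x = p 0 ∨ x = p 1 ∨ x ∈ (range n).image fun i => p (i + 2) := by
  simp only [mem_image, mem_range]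
  constructor
  · rintro ⟨_ | _ | j, hj, rfl⟩
    exacts [Or.inl rfl, Or.inr (Or.inl rfl), Or.inr (Or.inr ⟨j, by omega, rfl⟩)]
  · rintro (rfl | rfl | ⟨j, hj, rfl⟩)
    exacts [⟨0, by omega, rfl⟩, ⟨1, by omega, rfl⟩, ⟨j + 2, by omega, rfl⟩]

theorem Finset.apply_eq_apply_sdiff_biUnion_add_sum {α ι : Type*} [DecidableEq α] [DecidableEq ι]
    (N : Finset α → ℕ) (T : ι → Finset α) (c : ι → ℕ) (J : Finset ι)
    (hT : ∀ j ∈ J, ∀ s, T j ⊆ s → N s = N (s \ T j) + c j)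
    (hdisj : (J : Set ι).PairwiseDisjoint T) {s : Finset α} (hs : J.biUnion T ⊆ s) :
    N s = N (s \ J.biUnion T) + ∑ j ∈ J, c j := by
  induction J using Finset.induction_on generalizing s with
  | empty => simp
  | insert j J hj ih =>
    rw [biUnion_insert, union_subset_iff] at hs
    have hJ : J.biUnion T ⊆ s \ T j := fun x hx => mem_sdiff.mpr ⟨hs.2 hx, fun hxj => by
      obtain ⟨j', hj', hxj'⟩ := mem_biUnion.mp hx
      exact disjoint_left.mp (hdisj (mem_insert_self j J) (mem_insert_of_mem hj')
        (fun h => hj (h ▸ hj'))) hxj hxj'⟩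
    rw [hT j (mem_insert_self j J) s hs.1,
      ih (fun j' hj' => hT j' (mem_insert_of_mem hj')) (hdisj.subset (by simp)) hJ,
      sdiff_sdiff_left, sup_eq_union, biUnion_insert, sum_insert hj]
    ring

lemma two_mul_card_add_sum_div_two_eq_iff {ι : Type*} [Fintype ι] (l : ι → ℕ) :
    2 * (Fintype.card ι + ∑ j, l j / 2) = Fintype.card ι + ∑ j, l j ↔ ∀ j, Odd (l j) := by
  simp only [Fintype.card_eq_sum_ones, mul_add, mul_sum, ← sum_add_distrib]
  rw [eq_comm, sum_eq_sum_iff_of_le fun j _ => by omega]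
  simp only [mem_univ, true_implies, Nat.odd_iff]
  exact forall_congr' fun j => by omega

section GapPosition

variable {g k : ℕ} {l : ZMod k → ℕ} {m : ZMod k → ZMod g}

def gapPosition (m : ZMod k → ZMod g) (l : ZMod k → ℕ) (p : Σ j, Fin (l j + 1)) : ZMod g :=
  m p.1 + (p.2 : ℕ)

lemma exists_eq_add_of_step (hstep : ∀ j, m (j + 1) = m j + ((l j : ℕ) + 1 : ℕ)) (d : ℕ) :
    ∃ j, ∃ r ≤ l j, m 0 + d = m j + r := by
  induction d with
  | zero => exact ⟨0, 0, Nat.zero_le _, by simp⟩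
  | succ d ih =>
    obtain ⟨j, r, hr, h⟩ := ih
    rcases hr.lt_or_eq with hr | rfl
    · exact ⟨j, r + 1, hr, by push_cast; rw [← add_assoc, h, add_assoc]⟩
    · exact ⟨j + 1, 0, Nat.zero_le _, by rw [hstep]; push_cast; rw [← add_assoc, h]; ring⟩

theorem gapPosition_bijective [NeZero k] (hstep : ∀ j, m (j + 1) = m j + ((l j : ℕ) + 1 : ℕ))
    (hsum : g = k + ∑ j, l j) : Function.Bijective (gapPosition m l) := by
  have : NeZero g := ⟨by have := NeZero.ne k; omega⟩
  refine (Fintype.bijective_iff_surjective_and_card _).mpr ⟨fun q => ?_, ?_⟩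
  · obtain ⟨j, r, hr, h⟩ := exists_eq_add_of_step hstep (q - m 0).val
    exact ⟨⟨j, r, Nat.lt_succ_of_le hr⟩, by rw [gapPosition, ← h, ZMod.natCast_zmod_val]; ring⟩
  · simp [Fintype.card_sigma, sum_add_distrib, ZMod.card, hsum, add_comm]

lemma eq_of_add_eq_add_of_bijective (hbij : Function.Bijective (gapPosition m l))
    {j j' : ZMod k} {r r' : ℕ} (hr : r ≤ l j) (hr' : r' ≤ l j') (h : m j + r = m j' + r') :
    j = j' :=
  congrArg Sigma.fst (hbij.1 (a₁ := ⟨j, r, Nat.lt_succ_of_le hr⟩)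
    (a₂ := ⟨j', r', Nat.lt_succ_of_le hr'⟩) h)

lemma exists_eq_add_of_bijective (hbij : Function.Bijective (gapPosition m l)) (q : ZMod g) :
    ∃ j, ∃ r ≤ l j, q = m j + r := by
  obtain ⟨⟨j, r⟩, h⟩ := hbij.2 q
  exact ⟨j, r, Nat.le_of_lt_succ r.2, h.symm⟩

end GapPosition

namespace SignedGraph

variable {V : Type*} (Γ : SignedGraph V)

lemma adjMatrix_eq_zero_iff {x y : V} : Γ.adjMatrix x y = 0 ↔ ¬ Γ.G.Adj x y := by
  unfold adjMatrix
  split_ifs with h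
  · rcases Γ.sign_pm x y h with h1 | h1 <;> simp [h, h1]
  · simp [h]

variable [DecidableEq V]

theorem negInertia_inducedOn_univ [Fintype V] : (Γ.inducedOn univ).negInertia = Γ.negInertia :=
  Matrix.negInertia_submatrix_equiv Γ.isHermitian (Equiv.subtypeUnivEquiv mem_univ) _

theorem negInertia_inducedOn_eq_zero {s : Finset V} (h : ∀ x ∈ s, ∀ y ∈ s, ¬ Γ.G.Adj x y) :
    (Γ.inducedOn s).negInertia = 0 :=
  Matrix.negInertia_eq_zero _ <| Matrix.ext fun x y =>
    (Γ.adjMatrix_eq_zero_iff).mpr (h x x.2 y y.2)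

theorem negInertia_inducedOn_of_pendant {s : Finset V} {v u : V} (hv : v ∈ s) (hu : u ∈ s)
    (hvu : Γ.G.Adj v u) (hpend : ∀ x ∈ s, Γ.G.Adj v x → x = u) :
    (Γ.inducedOn s).negInertia = (Γ.inducedOn (s \ {v, u})).negInertia + 1 := by
  set Γs := Γ.inducedOn s
  set e : {x // x ∈ s \ {v, u}} → {x // x ∈ s} := fun x => ⟨x, (mem_sdiff.mp x.2).1⟩
  have he : Function.Injective e := fun x y h =>
    Subtype.ext (congrArg (fun z : {x // x ∈ s} => z.1) h)
  have hrange : ∀ x, x ∈ Set.range e ↔ x ≠ ⟨u, hu⟩ ∧ x ≠ ⟨v, hv⟩ := fun x => by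
    simp [e, Subtype.ext_iff, and_comm]
  have hrow : ∀ x, x ≠ ⟨u, hu⟩ → Γs.adjMatrix ⟨v, hv⟩ x = 0 := fun x hx =>
    Γs.adjMatrix_eq_zero_iff.mpr fun h => hx (Subtype.ext (hpend x x.2 h))
  have hvu' : Γs.G.Adj ⟨v, hv⟩ ⟨u, hu⟩ := hvu
  exact Matrix.negInertia_eq_submatrix_add_one_of_pendant Γs.isHermitian
    (Γs.adjMatrix_eq_zero_iff.mpr Γs.G.irrefl) (Γs.adjMatrix_eq_zero_iff.not_left.mpr hvu')
    hrow he hrange _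

theorem negInertia_inducedOn_sdiff_path (L : ℕ) (p : ℕ → V) (s : Finset V)
    (hinj : Set.InjOn p (range (2 * L))) (hsub : (range (2 * L)).image p ⊆ s)
    (hadj : ∀ i < L, Γ.G.Adj (p (2 * i)) (p (2 * i + 1)))
    (hpend : ∀ i < L, ∀ x ∈ s, Γ.G.Adj (p (2 * i)) x →
      x = p (2 * i + 1) ∨ x ∈ (range (2 * i)).image p) :
    (Γ.inducedOn s).negInertia = (Γ.inducedOn (s \ (range (2 * L)).image p)).negInertia + L := by
  induction L generalizing p s with
  | zero => rw [mul_zero, range_zero, image_empty, sdiff_empty, add_zero]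
  | succ L ih =>
    have hmem : ∀ {x}, x ∈ (range (2 * L + 2)).image p ↔
        x = p 0 ∨ x = p 1 ∨ x ∈ (range (2 * L)).image fun i => p (i + 2) :=
      mem_image_range_add_two
    have hp : ∀ i < 2 * L + 2, p i ∈ s := fun i hi => hsub (mem_image_of_mem p (mem_range.mpr hi))
    have hne : ∀ i < 2 * L, p (i + 2) ≠ p 0 ∧ p (i + 2) ≠ p 1 := fun i hi =>
      ⟨fun h => by have := hinj (by simp; omega) (by simp) h; omega,
        fun h => by have := hinj (by simp; omega) (by simp; omega) h; omega⟩
    rw [Γ.negInertia_inducedOn_of_pendant (hp 0 (by omega)) (hp 1 (by omega)) (hadj 0 (by omega))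
      fun x hx h => by simpa using hpend 0 (by omega) x hx h]
    rw [ih (fun i => p (i + 2)) (s \ {p 0, p 1}) ?_ ?_ ?_ ?_]
    · have hset : (s \ {p 0, p 1}) \ (range (2 * L)).image (fun i => p (i + 2)) =
          s \ (range (2 * (L + 1))).image p := by
        ext x
        simp only [mem_sdiff, mem_insert, mem_singleton, mul_add, mul_one, hmem]
        tauto
      rw [hset, add_assoc]
    · intro i hi j hj h
      have := hinj (by simp at hi ⊢; omega) (by simp at hj ⊢; omega) h
      omega
    · intro x hx
      obtain ⟨i, hi, rfl⟩ := mem_image.mp hx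
      have := hne i (mem_range.mp hi)
      simp [hp (i + 2) (by simp at hi; omega), this.1, this.2]
    · intro i hi
      simpa [mul_add, add_assoc] using hadj (i + 1) (by omega)
    · intro i hi x hx h
      have hx' := mem_sdiff.mp hx
      rcases hpend (i + 1) (by omega) x hx'.1 (by simpa [mul_add] using h) with h1 | h1
      · left; simpa [mul_add, add_assoc] using h1
      · right
        rw [show 2 * (i + 1) = 2 * i + 2 by ring, mem_image_range_add_two] at h1
        rcases h1 with rfl | rfl | h1
        · simp at hx'
        · simp at hx'
        · exact h1

/-- What the eliminations remove around the major vertex `f q`: the pair formed by `f q` and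
its pendant vertex `x`, then `L` consecutive pairs of the path that follows on the cycle. -/
def gapBlock {g : ℕ} (f : ZMod g → V) (x : V) (q : ZMod g) (L : ℕ) : Finset V :=
  {x, f q} ∪ (range (2 * L)).image fun i => f (q + (i + 1 : ℕ))

lemma mem_gapBlock {g : ℕ} {f : ZMod g → V} {x y : V} {q : ZMod g} {L : ℕ} :
    y ∈ gapBlock f x q L ↔ y = x ∨ ∃ r ≤ 2 * L, y = f (q + r) := by
  simp only [gapBlock, mem_union, mem_insert, mem_singleton, mem_image, mem_range]
  constructor
  · rintro ((rfl | rfl) | ⟨i, hi, rfl⟩)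
    exacts [Or.inl rfl, Or.inr ⟨0, Nat.zero_le _, by simp⟩, Or.inr ⟨i + 1, hi, rfl⟩]
  · rintro (rfl | ⟨_ | r, hr, rfl⟩)
    exacts [Or.inl (Or.inl rfl), Or.inl (Or.inr (by simp)), Or.inr ⟨r, by omega, rfl⟩]

lemma eq_or_mem_of_adj_cyclePath {g : ℕ} {f : ZMod g → V}
    (hchord : ∀ i j, Γ.G.Adj (f i) (f j) → j = i + 1 ∨ i = j + 1) {q : ZMod g} {L : ℕ}
    (hgap : ∀ t : ℕ, 1 ≤ t → t ≤ 2 * L → ∀ y ∉ Set.range f, ¬ Γ.G.Adj y (f (q + t)))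
    {s : Finset V} (hqs : f q ∉ s) (i : ℕ) (hi : i < L) {y : V} (hy : y ∈ s)
    (hadj : Γ.G.Adj (f (q + (2 * i + 1 : ℕ))) y) :
    y = f (q + (2 * i + 1 + 1 : ℕ)) ∨ y ∈ (range (2 * i)).image fun r => f (q + (r + 1 : ℕ)) := by
  obtain ⟨q', rfl⟩ : y ∈ Set.range f := by
    by_contra hyf
    exact hgap (2 * i + 1) (by omega) (by omega) y hyf hadj.symm
  rcases hchord _ _ hadj with h | h
  · left
    rw [h]
    push_cast
    ring_nf
  · right
    push_cast at h
    rcases i with _ | i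
    · have : q' = q := by linear_combination -h
      exact absurd (this ▸ hy) hqs
    · refine mem_image.mpr ⟨2 * i + 1, by simp; omega, ?_⟩
      push_cast at h ⊢
      congr 1
      linear_combination h

theorem negInertia_inducedOn_sdiff_gapBlock {g : ℕ} {f : ZMod g → V} (hf : Function.Injective f)
    (hcyc : ∀ i, Γ.G.Adj (f i) (f (i + 1)))
    (hchord : ∀ i j, Γ.G.Adj (f i) (f j) → j = i + 1 ∨ i = j + 1) {x : V} {q : ZMod g}
    (hx : x ∉ Set.range f) (hxq : Γ.G.Adj x (f q)) (hxuniq : ∀ y, Γ.G.Adj x y → y = f q)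
    {L : ℕ} (hL : 2 * L < g)
    (hgap : ∀ t : ℕ, 1 ≤ t → t ≤ 2 * L → ∀ y ∉ Set.range f, ¬ Γ.G.Adj y (f (q + t)))
    {s : Finset V} (hs : gapBlock f x q L ⊆ s) :
    (Γ.inducedOn s).negInertia = (Γ.inducedOn (s \ gapBlock f x q L)).negInertia + (L + 1) := by
  set p : ℕ → V := fun i => f (q + (i + 1 : ℕ))
  have hpinj : ∀ a b, a ≤ 2 * L → b ≤ 2 * L → f (q + a) = f (q + b) → a = b := by
    intro a b ha hb h
    simpa [ZMod.val_cast_of_lt (show a < g by omega), ZMod.val_cast_of_lt (show b < g by omega)]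
      using congrArg ZMod.val (add_left_cancel (hf h))
  have hxs : x ∈ s := hs (by simp [gapBlock])
  have hqs : f q ∈ s := hs (by simp [gapBlock])
  rw [Γ.negInertia_inducedOn_of_pendant hxs hqs hxq fun y _ => hxuniq y,
    Γ.negInertia_inducedOn_sdiff_path L p _ ?_ ?_ ?_ ?_, sdiff_sdiff_left, sup_eq_union, gapBlock,
    add_assoc]
  · intro i hi j hj h
    have := hpinj (i + 1) (j + 1) (by simp at hi; omega) (by simp at hj; omega) h
    omega
  · intro y hy
    obtain ⟨i, hi, rfl⟩ := mem_image.mp hy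
    refine mem_sdiff.mpr ⟨hs (mem_union_right _ hy), ?_⟩
    simp only [mem_insert, mem_singleton, not_or]
    refine ⟨fun h => hx ⟨_, h⟩, fun h => ?_⟩
    have := hpinj (i + 1) 0 (by simp at hi; omega) (by omega) (by simpa [p] using h)
    omega
  · intro i hi
    have := hcyc (q + (2 * i + 1 : ℕ))
    rwa [add_assoc, ← Nat.cast_add_one] at this
  · exact fun i hi y hy => Γ.eq_or_mem_of_adj_cyclePath hchord hgap (by simp) i hi hy

variable {g k : ℕ} {f : ZMod g → V} {l : ZMod k → ℕ} {m : ZMod k → ZMod g}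

lemma pairwiseDisjoint_gapBlock (hf : Function.Injective f)
    (hbij : Function.Bijective (gapPosition m l)) {x : ZMod k → V}
    (hx : ∀ j, x j ∉ Set.range f) (hxuniq : ∀ j y, Γ.G.Adj (x j) y → y = f (m j))
    (hxm : ∀ j, Γ.G.Adj (x j) (f (m j))) :
    Set.univ.PairwiseDisjoint fun j => gapBlock f (x j) (m j) (l j / 2) := by
  intro j _ j' _ hjj'
  refine disjoint_left.mpr fun y hy hy' => hjj' ?_
  rcases mem_gapBlock.mp hy with rfl | ⟨r, hr, rfl⟩ <;>
    rcases mem_gapBlock.mp hy' with h | ⟨r', hr', h⟩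
  · have := hf (hxuniq j _ (h ▸ hxm j'))
    exact eq_of_add_eq_add_of_bijective hbij (r := 0) (r' := 0) (Nat.zero_le _) (Nat.zero_le _)
      (by simpa using this.symm)
  · exact absurd ⟨_, h.symm⟩ (hx j)
  · exact absurd ⟨_, h⟩ (hx j')
  · exact eq_of_add_eq_add_of_bijective hbij (by omega) (by omega) (hf h)

theorem not_adj_of_mem_sdiff_biUnion_gapBlock [Fintype V] [NeZero k]
    (hchord : ∀ i j, Γ.G.Adj (f i) (f j) → j = i + 1 ∨ i = j + 1)
    (hleaf : ∀ x : V, x ∉ Set.range f → ∀ y : V, Γ.G.Adj x y → y ∈ Set.range f)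
    (hstep : ∀ j, m (j + 1) = m j + ((l j : ℕ) + 1 : ℕ))
    (hbij : Function.Bijective (gapPosition m l))
    (hgap : ∀ j, ∀ t : ℕ, 1 ≤ t → t ≤ l j →
      ¬ ∃ x : V, x ∉ Set.range f ∧ Γ.G.Adj x (f (m j + (t : ℕ))))
    (x : ZMod k → V) :
    let R := univ \ univ.biUnion fun j => gapBlock f (x j) (m j) (l j / 2)
    ∀ y ∈ R, ∀ z ∈ R, ¬ Γ.G.Adj y z := by
  set B := univ.biUnion fun j => gapBlock f (x j) (m j) (l j / 2)
  have hmajor : ∀ j, f (m j) ∈ B := fun j => mem_biUnion.mpr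
    ⟨j, mem_univ _, mem_gapBlock.mpr (Or.inr ⟨0, Nat.zero_le _, by simp⟩)⟩
  have hpendant : ∀ y z, y ∉ Set.range f → Γ.G.Adj y z → z ∈ B := by
    intro y z hy hyz
    obtain ⟨q, rfl⟩ := hleaf y hy z hyz
    obtain ⟨j, r, hr, rfl⟩ := exists_eq_add_of_bijective hbij q
    rcases Nat.eq_zero_or_pos r with rfl | hr0
    · simpa using hmajor j
    · exact absurd ⟨y, hy, hyz⟩ (hgap j r hr0 hr)
  -- a cycle vertex outside the blocks can only end a gap of odd length
  have hsucc : ∀ q, f q ∉ B → f (q + 1) ∈ B := by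
    intro q hq
    obtain ⟨j, r, hr, rfl⟩ := exists_eq_add_of_bijective hbij q
    have hrl : r = l j := by
      by_contra hne
      exact hq (mem_biUnion.mpr ⟨j, mem_univ _, mem_gapBlock.mpr (Or.inr ⟨r, by omega, rfl⟩)⟩)
    rw [hrl, add_assoc, ← Nat.cast_add_one, ← hstep]
    exact hmajor (j + 1)
  intro R y hy z hz hyz
  rw [mem_sdiff] at hy hz
  by_cases hyf : y ∈ Set.range f
  · by_cases hzf : z ∈ Set.range f
    · obtain ⟨q, rfl⟩ := hyf
      obtain ⟨q', rfl⟩ := hzf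
      rcases hchord q q' hyz with rfl | rfl
      · exact hz.2 (hsucc q hy.2)
      · exact hy.2 (hsucc q' hz.2)
    · exact hy.2 (hpendant z _ hzf hyz.symm)
  · exact hz.2 (hpendant y z hyf hyz)

theorem negInertia_eq_card_add_sum_div_two [Fintype V] [NeZero k] (hf : Function.Injective f)
    (hcyc : ∀ i : ZMod g, Γ.G.Adj (f i) (f (i + 1)))
    (hchord : ∀ i j : ZMod g, Γ.G.Adj (f i) (f j) → j = i + 1 ∨ i = j + 1)
    (hcanon : ∀ x : V, x ∉ Set.range f → ∃! y : V, Γ.G.Adj x y)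
    (hleaf : ∀ x : V, x ∉ Set.range f → ∀ y : V, Γ.G.Adj x y → y ∈ Set.range f)
    (hmaj : ∀ j : ZMod k, ∃ x : V, x ∉ Set.range f ∧ Γ.G.Adj x (f (m j)))
    (hstep : ∀ j : ZMod k, m (j + 1) = m j + ((l j : ℕ) + 1 : ℕ))
    (hgap : ∀ j : ZMod k, ∀ t : ℕ, 1 ≤ t → t ≤ l j →
      ¬ ∃ x : V, x ∉ Set.range f ∧ Γ.G.Adj x (f (m j + (t : ℕ))))
    (hsum : g = k + ∑ j : ZMod k, l j) :
    Γ.negInertia = k + ∑ j, l j / 2 := by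
  choose x hx hxm using hmaj
  have hxuniq : ∀ j y, Γ.G.Adj (x j) y → y = f (m j) :=
    fun j _ hy => (hcanon _ (hx j)).unique hy (hxm j)
  have hbij := gapPosition_bijective hstep hsum
  have hlg : ∀ j, 2 * (l j / 2) < g := fun j => by
    have := single_le_sum (fun j _ => Nat.zero_le (l j)) (mem_univ j)
    have := NeZero.ne k
    omega
  set T := fun j => gapBlock f (x j) (m j) (l j / 2)
  have hT : ∀ j ∈ univ, ∀ s, T j ⊆ s →
      (Γ.inducedOn s).negInertia = (Γ.inducedOn (s \ T j)).negInertia + (l j / 2 + 1) :=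
    fun j _ s hs => Γ.negInertia_inducedOn_sdiff_gapBlock hf hcyc hchord (hx j) (hxm j)
      (hxuniq j) (hlg j) (fun t h1 h2 y hy hyq => hgap j t h1 (by omega) ⟨y, hy, hyq⟩) hs
  have hdisj : ((univ : Finset (ZMod k)) : Set (ZMod k)).PairwiseDisjoint T := by
    simpa using Γ.pairwiseDisjoint_gapBlock hf hbij hx hxuniq hxm
  calc Γ.negInertia = (Γ.inducedOn univ).negInertia := (Γ.negInertia_inducedOn_univ).symm
    _ = (Γ.inducedOn (univ \ univ.biUnion T)).negInertia + ∑ j, (l j / 2 + 1) :=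
      apply_eq_apply_sdiff_biUnion_add_sum _ T _ univ hT hdisj (subset_univ _)
    _ = k + ∑ j, l j / 2 := by
      rw [Γ.negInertia_inducedOn_eq_zero
        (Γ.not_adj_of_mem_sdiff_biUnion_gapBlock hchord hleaf hstep hbij hgap x), sum_add_distrib]
      simp [ZMod.card, add_comm]

end SignedGraph

theorem canonical_unicyclic_negInertia_even_girth_general {V : Type*} [Fintype V] [DecidableEq V]
    (Γ : SignedGraph V)
    (g : ℕ) (hmod : g % 4 = 0 ∨ g % 4 = 2)
    -- the unique cycle, enumerated by `f`
    (f : ZMod g → V) (hf : Function.Injective f)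
    (hcyc : ∀ i : ZMod g, Γ.G.Adj (f i) (f (i + 1)))
    (hchord : ∀ i j : ZMod g, Γ.G.Adj (f i) (f j) → j = i + 1 ∨ i = j + 1)
    -- canonical: each off-cycle vertex is a pendant attached to exactly one cycle vertex
    (hcanon : ∀ x : V, x ∉ Set.range f → ∃! y : V, Γ.G.Adj x y)
    (hleaf : ∀ x : V, x ∉ Set.range f → ∀ y : V, Γ.G.Adj x y → y ∈ Set.range f)
    -- the `k ≥ 1` major vertices `f (m j)` and the gap lengths `l j` between them
    (k : ℕ) [NeZero k] (l : ZMod k → ℕ) (m : ZMod k → ZMod g)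
    (hmaj : ∀ j : ZMod k, ∃ x : V, x ∉ Set.range f ∧ Γ.G.Adj x (f (m j)))
    (hstep : ∀ j : ZMod k, m (j + 1) = m j + ((l j : ℕ) + 1 : ℕ))
    (hgap : ∀ j : ZMod k, ∀ t : ℕ, 1 ≤ t → t ≤ l j →
      ¬ ∃ x : V, x ∉ Set.range f ∧ Γ.G.Adj x (f (m j + (t : ℕ))))
    (hsum : g = k + ∑ j : ZMod k, l j) :
    Γ.negInertia = (g + 1) / 2 ↔ ∀ j : ZMod k, Odd (l j) := by
  rw [Γ.negInertia_eq_card_add_sum_div_two hf hcyc hchord hcanon hleaf hmaj hstep hgap hsum,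
    ← two_mul_card_add_sum_div_two_eq_iff, ZMod.card, ← hsum]
  omega

/-- canonical signed unicyclic graph, girth `g ≡ 0, 2 (mod 4)`, not a
cycle: `i₋(Γ) = ⌈g/2⌉` iff all gap lengths `l j` are odd. -/
theorem canonical_unicyclic_negInertia_even_girth {V : Type*} [Fintype V] [DecidableEq V]
    (Γ : SignedGraph V) (hconn : Γ.G.Connected)
    (g : ℕ) (hg : 3 ≤ g) (hmod : g % 4 = 0 ∨ g % 4 = 2)
    -- the unique cycle, enumerated by `f`
    (f : ZMod g → V) (hf : Function.Injective f)
    (hcyc : ∀ i : ZMod g, Γ.G.Adj (f i) (f (i + 1)))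
    (hchord : ∀ i j : ZMod g, Γ.G.Adj (f i) (f j) → j = i + 1 ∨ i = j + 1)
    -- canonical: each off-cycle vertex is a pendant attached to exactly one cycle vertex
    (hcanon : ∀ x : V, x ∉ Set.range f → ∃! y : V, Γ.G.Adj x y)
    (hleaf : ∀ x : V, x ∉ Set.range f → ∀ y : V, Γ.G.Adj x y → y ∈ Set.range f)
    -- the `k ≥ 1` major vertices `f (m j)` and the gap lengths `l j` between them
    (k : ℕ) [NeZero k] (l : ZMod k → ℕ) (m : ZMod k → ZMod g)
    (hmaj : ∀ j : ZMod k, ∃ x : V, x ∉ Set.range f ∧ Γ.G.Adj x (f (m j)))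
    (hstep : ∀ j : ZMod k, m (j + 1) = m j + ((l j : ℕ) + 1 : ℕ))
    (hgap : ∀ j : ZMod k, ∀ t : ℕ, 1 ≤ t → t ≤ l j →
      ¬ ∃ x : V, x ∉ Set.range f ∧ Γ.G.Adj x (f (m j + (t : ℕ))))
    (hsum : g = k + ∑ j : ZMod k, l j) :
    Γ.negInertia = (g + 1) / 2 ↔ ∀ j : ZMod k, Odd (l j) :=
  canonical_unicyclic_negInertia_even_girth_general Γ g hmod f hf hcyc hchord hcanon hleaf k l m
    hmaj hstep hgap hsum
end

section
/- Let Γ be a connected signed graph on n vertices with girth g. Then η(Γ) ≤ n − g + 2, where η(Γ) is the nullity of the adjacency matrix of Γ. -/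
open Matrix

open SimpleGraph

theorem Matrix.card_le_rank_of_isUnit_submatrix {m n ι R : Type*} [Fintype n] [Fintype ι]
    [DecidableEq ι] [CommRing R] [StrongRankCondition R] (A : Matrix m n R) (r : ι → m)
    (c : ι → n) (h : IsUnit (A.submatrix r c)) : Fintype.card ι ≤ A.rank :=
  (A.submatrix r c).rank_of_isUnit h ▸ A.rank_submatrix_le r c

namespace SimpleGraph.Walk

variable {V : Type*} {G : SimpleGraph V}

/-- A chord of a shortest cycle would close a strictly shorter cycle. -/
theorem IsCycle.not_adj_getVert_of_egirth_eq {a : V} {w : G.Walk a a} (hw : w.IsCycle)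
    (hg : G.egirth = w.length) {p q : ℕ} (hpq : p + 2 ≤ q) (hq : q + 2 ≤ w.length) :
    ¬ G.Adj (w.getVert p) (w.getVert q) := by
  intro hadj
  have hstart : (w.take q).getVert p = w.getVert p := by
    rw [take_getVert, min_eq_right (by omega)]
  let arc : G.Walk (w.getVert p) (w.getVert q) := ((w.take q).drop p).copy hstart rfl
  have harc : arc.IsPath := by
    simpa [arc] using (hw.isPath_take (by omega)).drop p
  have harc_length : arc.length = q - p := by
    simp [arc, drop_length, take_length, min_eq_left (by omega : q ≤ w.length)]
  have hcycle : (cons hadj.symm arc).IsCycle :=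
    isCycle_iff_isPath_tail_and_le_length.mpr ⟨by simpa using harc, by rw [length_cons, harc_length]; omega⟩
  have := egirth_le_length hcycle
  rw [hg, length_cons, harc_length] at this
  norm_cast at this
  omega

end SimpleGraph.Walk

namespace SignedGraph

variable {V : Type*}

theorem adjMatrix_ne_zero_iff (Γ : SignedGraph V) {u v : V} :
    Γ.adjMatrix u v ≠ 0 ↔ Γ.G.Adj u v := by
  by_cases h : Γ.G.Adj u v
  · rcases Γ.sign_pm u v h with hs | hs <;> simp [adjMatrix, h, hs]
  · simp [adjMatrix, h]

variable [Fintype V]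

/-- Along a shortest cycle `v₀ v₁ … v_{g-1}`, the rows `v₀, …, v_{g-3}` and columns
`v₁, …, v_{g-2}` of the adjacency matrix form a lower triangular block with `±1` on the diagonal,
since the cycle has no chords. -/
theorem length_sub_two_le_rank (Γ : SignedGraph V) {a : V} {w : Γ.G.Walk a a} (hw : w.IsCycle)
    (hg : Γ.G.egirth = w.length) : w.length - 2 ≤ Γ.adjMatrix.rank := by
  set M := Γ.adjMatrix.submatrix (fun i : Fin (w.length - 2) => w.getVert i)
    (fun i : Fin (w.length - 2) => w.getVert (i + 1))
  have hlower : M.IsLowerTriangular := by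
    intro i j hij
    have hj := j.isLt
    by_contra hne
    exact hw.not_adj_getVert_of_egirth_eq hg (p := i) (q := j + 1)
      (by simp only [OrderDual.toDual_lt_toDual] at hij; omega)
      (by omega) (Γ.adjMatrix_ne_zero_iff.mp hne)
  have hdiag : ∀ i, M i i ≠ 0 := fun i =>
    Γ.adjMatrix_ne_zero_iff.mpr (w.adj_getVert_succ (by omega))
  have hunit : IsUnit M := by
    rw [Matrix.isUnit_iff_isUnit_det, Matrix.det_of_isLowerTriangular M hlower, isUnit_iff_ne_zero]
    exact Finset.prod_ne_zero_iff.mpr fun i _ => hdiag i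
  simpa using Γ.adjMatrix.card_le_rank_of_isUnit_submatrix _ _ hunit

variable [DecidableEq V]

theorem nullity_add_rank (Γ : SignedGraph V) :
    Γ.nullity + Γ.adjMatrix.rank = Fintype.card V := by
  rw [Γ.isHermitian.rank_eq_card_non_zero_eigs, nullity, Fintype.card_subtype,
    Finset.card_filter_add_card_filter_not]
  rfl

end SignedGraph

theorem nullity_le_of_girth_general {V : Type*} [Fintype V] [DecidableEq V] (Γ : SignedGraph V)
    (g : ℕ) (hg : Γ.G.egirth = g) :
    Γ.nullity ≤ Fintype.card V - g + 2 := by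
  have hcyclic : ¬ Γ.G.IsAcyclic := fun h => ENat.top_ne_natCast g (h.egirth_eq_top ▸ hg)
  obtain ⟨a, w, hw, hlength⟩ := exists_egirth_eq_length.mpr hcyclic
  have hwg : w.length = g := by exact_mod_cast hlength.symm.trans hg
  have hrank := Γ.length_sub_two_le_rank hw hlength
  have hsum := Γ.nullity_add_rank
  omega

/-- for a connected signed graph of order `n` and girth `g`,
`η(Γ) ≤ n - g + 2`. -/
theorem nullity_le_of_girth {V : Type*} [Fintype V] [DecidableEq V] (Γ : SignedGraph V)
    (hconn : Γ.G.Connected) (g : ℕ) (hg : Γ.G.egirth = g) :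
    Γ.nullity ≤ Fintype.card V - g + 2 :=
  nullity_le_of_girth_general Γ g hg
end
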